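/- arXiv:1707.02753 — 3 statements merged into one kernel-verified Lean document; each statement's English description precedes it below -/
import Mathlib

section
/- Let I=(V,E,𝔗,d) be a Steiner Forest instance, let F be a feasible solution with connected components F_1,…,F_{cc(F)}, and let A be a feasible tree solution. Let S_u be the set of unsafe edges of A, and assume A is removing-swap-optimal (no deletion of a feasible-to-remove edge set decreases φ). Then w(A) + Σ_{e∈S_u} d_e ≤ Σ_{i=1}^{cc(F)} w(F_i). -/
open Finset

attribute [local instance] Classical.propDecidable

variable {V : Type*} [Fintype V] [DecidableEq V]

/-- The simple graph on `V` induced by a finite set of (undirected) edges. -/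
def graphOf (F : Finset (Sym2 V)) : SimpleGraph V where
  Adj u v := u ≠ v ∧ s(u, v) ∈ F
  symm := by
    constructor
    intro u v h
    refine ⟨Ne.symm h.1, ?_⟩
    rw [Sym2.eq_swap]
    exact h.2
  loopless := by constructor; intro v h; exact h.1 rfl

/-- The set of vertices incident to at least one edge of `F` (denoted `V[F]` in the paper). -/
def supp (F : Finset (Sym2 V)) : Set V := {v | ∃ e ∈ F, v ∈ e}

/-- A Steiner forest `F` is feasible for the terminal pairs `T` if it connects every pair. -/
def Feasible (F : Finset (Sym2 V)) (T : Finset (V × V)) : Prop :=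
  ∀ p ∈ T, (graphOf F).Reachable p.1 p.2

/-- Total edge cost `d(F)`. -/
def cost (d : Sym2 V → ℝ) (F : Finset (Sym2 V)) : ℝ := ∑ e ∈ F, d e

/-- `A` is a tree (on its vertex support): loopless edges, acyclic, connected on `V[A]`. -/
def IsTreeSol (A : Finset (Sym2 V)) : Prop :=
  (∀ e ∈ A, ¬ e.IsDiag) ∧ (graphOf A).IsAcyclic ∧
    ∀ u ∈ supp A, ∀ v ∈ supp A, (graphOf A).Reachable u v

/-- Shortest-path distance between `u` and `v` in the graph with edge set `Eall`
and edge lengths `d`. -/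
noncomputable def wdist (Eall : Finset (Sym2 V)) (d : Sym2 V → ℝ) (u v : V) : ℝ :=
  ⨅ p : (graphOf Eall).Walk u v, (p.edges.map d).sum

/-- Width of a vertex set `W`: the largest shortest-path distance of a terminal pair
whose two members both lie in `W`. -/
noncomputable def widthSet (Eall : Finset (Sym2 V)) (d : Sym2 V → ℝ) (T : Finset (V × V))
    (W : Set V) : ℝ :=
  sSup {x : ℝ | ∃ p ∈ T, p.1 ∈ W ∧ p.2 ∈ W ∧ x = wdist Eall d p.1 p.2}

/-- Total width `w(F)`: the sum of the widths of the connected components of `F`. -/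
noncomputable def totalWidth (Eall : Finset (Sym2 V)) (d : Sym2 V → ℝ) (T : Finset (V × V))
    (F : Finset (Sym2 V)) : ℝ :=
  ∑ᶠ c : (graphOf F).ConnectedComponent, widthSet Eall d T c.supp

/-- The potential `φ(F) = d(F) + w(F)`. -/
noncomputable def phi (Eall : Finset (Sym2 V)) (d : Sym2 V → ℝ) (T : Finset (V × V))
    (F : Finset (Sym2 V)) : ℝ :=
  cost d F + totalWidth Eall d T F

/-- Some edge of `F` leaves the vertex set `W`. -/
def leavesSet (F : Finset (Sym2 V)) (W : Set V) : Prop :=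
  ∃ g ∈ F, ∃ x y : V, g = s(x, y) ∧ x ∈ W ∧ y ∉ W

/-- `T_{e,f}`: the connected component of `A ∖ {e,f}` containing the interior of the
unique `e`–`f` path of the tree `A`; equivalently, the component containing an endpoint
of `e` together with an endpoint of `f`. -/
def midComp (A : Finset (Sym2 V)) (e f : Sym2 V) : Set V :=
  {v | ∃ x ∈ e, ∃ y ∈ f,
    (graphOf (A \ {e, f})).Reachable x y ∧ (graphOf (A \ {e, f})).Reachable x v}

/-- `e` and `f` are compatible w.r.t. `F` (`e ~cp f`). -/
def Compatible (A F : Finset (Sym2 V)) (e f : Sym2 V) : Prop :=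
  e = f ∨ ¬ leavesSet F (midComp A e f)

/-- `e` is safe: some `F`-edge crosses between the two components of `A ∖ {e}`. -/
def Safe (A F : Finset (Sym2 V)) (e : Sym2 V) : Prop :=
  ∃ g ∈ F, ∃ x y : V, g = s(x, y) ∧ x ≠ y ∧ ¬ (graphOf (A.erase e)).Reachable x y

/-- `e` is essential: removing it from `A` destroys feasibility. -/
def Essential (A : Finset (Sym2 V)) (T : Finset (V × V)) (e : Sym2 V) : Prop :=
  ¬ Feasible (A.erase e) T

/-- The compatibility class of the edge `e` of `A`. -/
noncomputable def cls (A F : Finset (Sym2 V)) (e : Sym2 V) : Finset (Sym2 V) :=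
  A.filter (fun f => Compatible A F e f)

/-- `S_u`: the set of unsafe edges of `A`. -/
noncomputable def unsafeCls (A F : Finset (Sym2 V)) : Finset (Sym2 V) :=
  A.filter (fun e => ¬ Safe A F e)

/-- `𝔖`: the set of compatibility classes of edges of `A`. -/
noncomputable def classes (A F : Finset (Sym2 V)) : Finset (Finset (Sym2 V)) :=
  A.image (cls A F)

/-- `e` lies on the fundamental cycle closed by adding the edge `f` to the tree `A`. -/
def onFundCycle (A : Finset (Sym2 V)) (f e : Sym2 V) : Prop :=
  e ∈ A ∧ ∀ x y : V, f = s(x, y) →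
    (graphOf A).Reachable x y ∧ ¬ (graphOf (A.erase e)).Reachable x y

/-- Edge/edge swap optimality of `A` w.r.t. added edges from `Eadd` and objective `obj`:
no swap that adds an edge `f ∈ Eadd` and removes one edge of the cycle it closes,
keeping feasibility, strictly decreases the objective. -/
def EdgeEdgeSwapOptimal (Eadd : Finset (Sym2 V)) (T : Finset (V × V))
    (obj : Finset (Sym2 V) → ℝ) (A : Finset (Sym2 V)) : Prop :=
  ∀ f ∈ Eadd, ∀ e, onFundCycle A f e →
    Feasible (A.erase e ∪ {f}) T → obj A ≤ obj (A.erase e ∪ {f})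

/-- Edge/set swap optimality of `A` w.r.t. added edges from `Eadd` and objective `obj`:
no swap that adds an edge `f ∈ Eadd` and removes a set `S` of edges of the cycle it closes,
keeping feasibility, strictly decreases the objective. -/
def EdgeSetSwapOptimal (Eadd : Finset (Sym2 V)) (T : Finset (V × V))
    (obj : Finset (Sym2 V) → ℝ) (A : Finset (Sym2 V)) : Prop :=
  ∀ f ∈ Eadd, ∀ S ⊆ A, (∀ e ∈ S, onFundCycle A f e) →
    Feasible ((A \ S) ∪ {f}) T → obj A ≤ obj ((A \ S) ∪ {f})

/-- Removing swap optimality: deleting any (feasibility preserving) edge set from `A`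
does not strictly decrease the objective. -/
def RemovingSwapOptimal (T : Finset (V × V))
    (obj : Finset (Sym2 V) → ℝ) (A : Finset (Sym2 V)) : Prop :=
  ∀ S ⊆ A, Feasible (A \ S) T → obj A ≤ obj (A \ S)

/-- Path/set swap optimality of `A`: for vertices `u, v` in the same component of `A`,
adding a set `P ⊆ Eadd` of edges (along a `u`–`v` connection) and removing a set `S` of
edges of the component of `u`, in a way that keeps `u,v` connected and the solution
feasible, does not strictly decrease the objective. -/
def PathSetSwapOptimal (Eadd : Finset (Sym2 V)) (T : Finset (V × V))
    (obj : Finset (Sym2 V) → ℝ) (A : Finset (Sym2 V)) : Prop :=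
  ∀ u v : V, (graphOf A).Reachable u v →
    ∀ P : Finset (Sym2 V), P ⊆ Eadd → ∀ S ⊆ A,
      (∀ e ∈ S, ∃ x ∈ e, (graphOf A).Reachable u x) →
      (graphOf ((A \ S) ∪ P)).Reachable u v →
      Feasible ((A \ S) ∪ P) T → obj A ≤ obj ((A \ S) ∪ P)

/-- A connected component `c` of `A ∖ S` is an *inner* component for the class `S`
if it touches (at least) two distinct edges of `S`. -/
def innerComp (A S : Finset (Sym2 V)) (c : (graphOf (A \ S)).ConnectedComponent) : Prop :=
  ∃ e ∈ S, ∃ e' ∈ S, e ≠ e' ∧ (∃ x ∈ e, (graphOf (A \ S)).connectedComponentMk x = c) ∧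
    ∃ y ∈ e', (graphOf (A \ S)).connectedComponentMk y = c

/-- The sum of the widths of the inner components `E_{S,i}`, `i ∈ In_S`, of the class `S`. -/
noncomputable def innerWidthSum (Eall : Finset (Sym2 V)) (d : Sym2 V → ℝ) (T : Finset (V × V))
    (A S : Finset (Sym2 V)) : ℝ :=
  ∑ᶠ c : (graphOf (A \ S)).ConnectedComponent,
    if innerComp A S c then widthSet Eall d T c.supp else 0

/-- `index(E')` for a vertex set `W`: the largest index `i` (in the enumeration `tp` of the
terminal pairs by nondecreasing distance) of a terminal pair lying entirely inside `W`. -/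
noncomputable def idxOf {nt : ℕ} (tp : Fin nt → V × V) (W : Set V) : ℕ :=
  sSup {i : ℕ | ∃ h : i < nt, (tp ⟨i, h⟩).1 ∈ W ∧ (tp ⟨i, h⟩).2 ∈ W}

/-- The finite vertex support of an edge set. -/
def suppF (B : Finset (Sym2 V)) : Finset V :=
  Finset.univ.filter (fun v => ∃ e ∈ B, v ∈ e)

/-- `e` crosses between two different connected components of `A`. -/
def crossingEdge (A : Finset (Sym2 V)) (e : Sym2 V) : Prop :=
  ∀ x y : V, e = s(x, y) → ¬ (graphOf A).Reachable x y

/-- The components of `A` touched by the edge set `B`, i.e. the nodes of `G_A`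
incident to `B`. -/
noncomputable def touched (A B : Finset (Sym2 V)) :
    Finset ((graphOf A).ConnectedComponent) :=
  (suppF B).image ((graphOf A).connectedComponentMk)

/-- `B` is (the edge set of) a tree in the contracted multigraph `G_A`: all its edges cross
between components of `A`, it is connected (through the components of `A` it touches), and
it has one edge less than the number of components it touches. -/
def IsGATree (A B : Finset (Sym2 V)) : Prop :=
  (∀ e ∈ B, crossingEdge A e) ∧ (touched A B).card = B.card + 1 ∧
    ∀ x ∈ suppF B, ∀ y ∈ suppF B, (graphOf (A ∪ B)).Reachable x y

/-- `A` is `c`-approximate connecting move optimal: for every tree `B` in `G_A` (with edges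
taken from `Emoves`), the total width of the components it connects, minus the largest of
these widths, is at most `c` times the length of the tree. -/
def ConnApproxOptimal (Emoves Eall : Finset (Sym2 V)) (d : Sym2 V → ℝ) (T : Finset (V × V))
    (c : ℝ) (A : Finset (Sym2 V)) : Prop :=
  ∀ B ⊆ Emoves, IsGATree A B →
    (∑ t ∈ touched A B, widthSet Eall d T t.supp)
      - (⨆ t ∈ touched A B, widthSet Eall d T t.supp) ≤ c * ∑ e ∈ B, d e

/-!
Deleting all unsafe edges `S_u` from the tree `A` keeps it feasible: every `F`-edge `xy` joins
two vertices of `V[A]`, and an unsafe edge `e` cannot lie on the `x`–`y` path of `A`, since then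
`xy` would cross between the two components of `A ∖ {e}`. Hence every component of `F` lies
inside a component of `A ∖ S_u`, so `w(A ∖ S_u) ≤ w(F)`, and removing-swap optimality gives
`d(A) + w(A) ≤ d(A) - d(S_u) + w(A ∖ S_u)`.
-/

namespace SteinerForest

open SimpleGraph

omit [Fintype V] [DecidableEq V] in
lemma mem_edgeSet_graphOf {B : Finset (Sym2 V)} {e : Sym2 V} :
    e ∈ (graphOf B).edgeSet ↔ e ∈ B ∧ ¬ e.IsDiag := by
  induction e using Sym2.ind with
  | _ x y => exact and_comm.trans (and_congr_right' Sym2.mk_isDiag_iff.not.symm)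

omit [Fintype V] [DecidableEq V] in
lemma graphOf_mono {B C : Finset (Sym2 V)} (h : B ⊆ C) : graphOf B ≤ graphOf C :=
  fun _ _ hadj => ⟨hadj.1, h hadj.2⟩

omit [Fintype V] [DecidableEq V] in
lemma mem_of_mem_edges {B : Finset (Sym2 V)} {u v : V} (p : (graphOf B).Walk u v)
    {e : Sym2 V} (he : e ∈ p.edges) : e ∈ B :=
  (mem_edgeSet_graphOf.mp (p.edges_subset_edgeSet he)).1

omit [Fintype V] [DecidableEq V] in
lemma reachable_of_forall_adj_reachable {G H : SimpleGraph V}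
    (h : ∀ x y, G.Adj x y → H.Reachable x y) {u v : V} (huv : G.Reachable u v) :
    H.Reachable u v := by
  rw [reachable_iff_reflTransGen] at huv ⊢
  exact Relation.ReflTransGen.lift' id (fun x y hxy => (reachable_iff_reflTransGen x y).mp
    (h x y hxy)) u v huv

omit [Fintype V] in
/-- The `u`–`v` path of a forest is unique, so it avoids every edge whose deletion keeps `u` and
`v` connected. -/
lemma reachable_sdiff_of_isAcyclic {A S : Finset (Sym2 V)} (hA : (graphOf A).IsAcyclic)
    {u v : V} (huv : (graphOf A).Reachable u v)
    (hS : ∀ e ∈ S, (graphOf (A.erase e)).Reachable u v) :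
    (graphOf (A \ S)).Reachable u v := by
  obtain ⟨p⟩ := huv
  have hp : ∀ e ∈ p.toPath.val.edges, e ∉ S := by
    intro e he heS
    obtain ⟨q⟩ := hS e heS
    have hle := graphOf_mono (erase_subset e A)
    rw [(hA.subsingleton_path u v).elim p.toPath ⟨_, q.toPath.prop.mapLe hle⟩,
      Walk.edges_mapLe_eq_edges] at he
    exact notMem_erase e A (mem_of_mem_edges _ he)
  refine (p.toPath.val.transfer (graphOf (A \ S)) fun e he => ?_).reachable
  exact mem_edgeSet_graphOf.mpr ⟨mem_sdiff.mpr ⟨mem_of_mem_edges _ he, hp e he⟩,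
    not_isDiag_of_mem_edgeSet _ (Walk.edges_subset_edgeSet _ he)⟩

lemma reachable_sdiff_unsafeCls {A F : Finset (Sym2 V)} (hA : IsTreeSol A)
    (hFA : supp F ⊆ supp A) ⦃u v : V⦄ (huv : (graphOf F).Reachable u v) :
    (graphOf (A \ unsafeCls A F)).Reachable u v := by
  refine reachable_of_forall_adj_reachable (fun x y hxy => ?_) huv
  have hx : x ∈ supp A := hFA ⟨_, hxy.2, Sym2.mem_mk_left x y⟩
  have hy : y ∈ supp A := hFA ⟨_, hxy.2, Sym2.mem_mk_right x y⟩
  refine reachable_sdiff_of_isAcyclic hA.2.1 (hA.2.2 x hx y hy) fun e he => ?_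
  by_contra hxy'
  exact (mem_filter.mp he).2 ⟨_, hxy.2, x, y, rfl, hxy.1, hxy'⟩

section Width

variable (Eall : Finset (Sym2 V)) (d : Sym2 V → ℝ) (T : Finset (V × V))

omit [Fintype V] [DecidableEq V] in
lemma le_widthSet {W : Set V} {p : V × V} (hp : p ∈ T) (h1 : p.1 ∈ W) (h2 : p.2 ∈ W) :
    wdist Eall d p.1 p.2 ≤ widthSet Eall d T W := by
  refine le_csSup ?_ ⟨p, hp, h1, h2, rfl⟩
  refine (T.finite_toSet.image fun p : V × V => wdist Eall d p.1 p.2).bddAbove.mono ?_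
  rintro x ⟨p, hp, -, -, rfl⟩
  exact ⟨p, hp, rfl⟩

variable {d}

omit [Fintype V] [DecidableEq V] in
lemma widthSet_nonneg (hd : ∀ e, 0 ≤ d e) (W : Set V) : 0 ≤ widthSet Eall d T W := by
  refine Real.sSup_nonneg ?_
  rintro x ⟨p, -, -, -, rfl⟩
  exact Real.iInf_nonneg fun w => List.sum_nonneg fun x hx => by
    obtain ⟨e, -, rfl⟩ := List.mem_map.mp hx
    exact hd e

/-- A terminal pair inside a component of `B` lies, by feasibility of `C`, inside one of the
components of `C` merged into it. -/
lemma totalWidth_le_of_reachable (hd : ∀ e, 0 ≤ d e) {B C : Finset (Sym2 V)}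
    (hC : Feasible C T) (hCB : ∀ ⦃u v⦄, (graphOf C).Reachable u v → (graphOf B).Reachable u v) :
    totalWidth Eall d T B ≤ totalWidth Eall d T C := by
  let σ : (graphOf C).ConnectedComponent → (graphOf B).ConnectedComponent :=
    ConnectedComponent.lift (graphOf B).connectedComponentMk
      fun u v p _ => ConnectedComponent.eq.mpr (hCB p.reachable)
  unfold totalWidth
  rw [finsum_eq_sum_of_fintype, finsum_eq_sum_of_fintype,
    ← sum_fiberwise univ σ fun c => widthSet Eall d T c.supp]
  have hw (c : (graphOf C).ConnectedComponent) : 0 ≤ widthSet Eall d T c.supp :=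
    widthSet_nonneg Eall T hd _
  refine sum_le_sum fun c _ => Real.sSup_le ?_ (sum_nonneg fun c' _ => hw c')
  rintro x ⟨p, hp, h1, -, rfl⟩
  let c' := (graphOf C).connectedComponentMk p.1
  calc wdist Eall d p.1 p.2
      ≤ widthSet Eall d T c'.supp :=
        le_widthSet Eall d T hp rfl (ConnectedComponent.eq.mpr (hC p hp).symm)
    _ ≤ _ := single_le_sum (f := fun c => widthSet Eall d T c.supp) (fun c _ => hw c)
        (mem_filter.mpr ⟨mem_univ c', h1⟩)

end Width

end SteinerForest

open SteinerForest in
theorem stmt11_removing_swap_bound_general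
    (Eall : Finset (Sym2 V)) (d : Sym2 V → ℝ) (hd : ∀ e, 0 ≤ d e)
    (T : Finset (V × V)) (A F : Finset (Sym2 V))
    (hFfeas : Feasible F T)
    (hAtree : IsTreeSol A) (hsupp : supp A = supp F)
    (hrem : RemovingSwapOptimal T (phi Eall d T) A) :
    totalWidth Eall d T A + ∑ e ∈ unsafeCls A F, d e ≤ totalWidth Eall d T F := by
  have hSA : unsafeCls A F ⊆ A := filter_subset _ A
  have hreach := reachable_sdiff_unsafeCls hAtree hsupp.ge
  have hopt := hrem _ hSA fun p hp => hreach (hFfeas p hp)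
  have hwidth := totalWidth_le_of_reachable Eall T hd hFfeas hreach
  have hcost := sum_sdiff (f := d) hSA
  unfold phi cost at hopt
  linarith

theorem stmt11_removing_swap_bound
    (Eall : Finset (Sym2 V)) (d : Sym2 V → ℝ) (hd : ∀ e, 0 ≤ d e)
    (T : Finset (V × V)) (A F : Finset (Sym2 V))
    (hAE : A ⊆ Eall) (hFE : F ⊆ Eall)
    (hAfeas : Feasible A T) (hFfeas : Feasible F T)
    (hAtree : IsTreeSol A) (hsupp : supp A = supp F)
    (hrem : RemovingSwapOptimal T (phi Eall d T) A) :
    totalWidth Eall d T A + ∑ e ∈ unsafeCls A F, d e ≤ totalWidth Eall d T F :=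
  stmt11_removing_swap_bound_general Eall d hd T A F hFfeas hAtree hsupp hrem
end

section
/- Let A be a feasible tree solution and F a feasible solution with V[A]=V[F], and let S, S' ∈ 𝔖∖{S_u} with S ≠ S'. Then exactly one of the following holds: (i) S' ⊆ E_{S,0} ∪ E_{S,ℓ(S)} (S' lies in the two outer components along the path of S), or (ii) there exists i ∈ {1,…,ℓ(S)−1} with S' ⊆ E_{S,i}. -/
open Finset

attribute [local instance] Classical.propDecidable

variable {V : Type*} [Fintype V] [DecidableEq V]

/-!
Two distinct tree edges `e`, `f` are compatible iff they cut the same `F`-edges: removing both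
leaves the side of `e`, the middle component `T_{e,f}` and the side of `f`, and an `F`-edge is
cut by exactly one of `e`, `f` iff exactly one of its endpoints lies in `T_{e,f}`. So
compatibility is an equivalence, the unsafe edges form one class, and the edges of any other
class are safe.

Let `W` be an inner component of `A \ S` containing an endpoint of `e ∈ S'`. No `F`-edge leaves
`W`, since it would be cut by both `S`-edges at which `W` touches `S`. Being safe and outside
`S`, `e` cuts some `F`-edge meeting `W`, which then lies inside `W`. Every `e' ∈ S'` cuts this
`F`-edge too, so `e'` lies in `W`.
-/

namespace Finset

variable {α : Type*} [DecidableEq α] {s t : Finset α} {a b : α}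

lemma sdiff_subset_erase_of_mem (hb : b ∈ t) : s \ t ⊆ s.erase b :=
  fun _ ha => mem_erase.mpr ⟨fun h => (mem_sdiff.mp ha).2 (h ▸ hb), (mem_sdiff.mp ha).1⟩

lemma mem_erase_of_mem_sdiff (ha : a ∈ s \ t) (hb : b ∈ t) : a ∈ s.erase b :=
  sdiff_subset_erase_of_mem hb ha

lemma sdiff_pair_eq_erase_erase : s \ {a, b} = (s.erase a).erase b := by
  rw [sdiff_insert, sdiff_singleton_eq_erase, erase_right_comm]

lemma sdiff_pair_subset_erase : s \ {a, b} ⊆ s.erase a :=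
  sdiff_subset_erase_of_mem (mem_insert_self a {b})

end Finset

open SimpleGraph

section

omit [Fintype V]

section Graph

variable {X Y : Finset (Sym2 V)}

omit [DecidableEq V] in
lemma graphOf_mono (h : X ⊆ Y) : graphOf X ≤ graphOf Y :=
  fun _ _ hadj => ⟨hadj.1, h hadj.2⟩

omit [DecidableEq V] in
lemma left_mem_supp {F : Finset (Sym2 V)} {u v : V} (h : s(u, v) ∈ F) : u ∈ supp F :=
  ⟨_, h, Sym2.mem_mk_left u v⟩

omit [DecidableEq V] in
lemma right_mem_supp {F : Finset (Sym2 V)} {u v : V} (h : s(u, v) ∈ F) : v ∈ supp F :=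
  ⟨_, h, Sym2.mem_mk_right u v⟩

omit [DecidableEq V] in
lemma reachable_of_mem_of_mem {e : Sym2 V} (he : e ∈ X) {u v : V} (hu : u ∈ e) (hv : v ∈ e) :
    (graphOf X).Reachable u v := by
  obtain rfl | huv := eq_or_ne u v
  · rfl
  · exact Adj.reachable ⟨huv, (Sym2.mem_and_mem_iff huv).mp ⟨hu, hv⟩ ▸ he⟩

lemma reachable_erase_or_exists_mem {u v : V} (h : (graphOf X).Reachable u v) (e : Sym2 V) :
    (graphOf (X.erase e)).Reachable u v ∨ ∃ z ∈ e, (graphOf (X.erase e)).Reachable u z := by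
  obtain ⟨p⟩ := h
  induction p with
  | nil => exact Or.inl .rfl
  | @cons u w v hadj _ ih =>
    by_cases hue : s(u, w) = e
    · exact Or.inr ⟨u, hue ▸ Sym2.mem_mk_left u w, .rfl⟩
    · have huw : (graphOf (X.erase e)).Reachable u w :=
        Adj.reachable ⟨hadj.1, mem_erase.mpr ⟨hue, hadj.2⟩⟩
      exact ih.imp huw.trans fun ⟨z, hz, hwz⟩ => ⟨z, hz, huw.trans hwz⟩

lemma reachable_erase_of_forall_not_reachable {u v : V} {e : Sym2 V}
    (h : (graphOf X).Reachable u v) (he : ∀ z ∈ e, ¬ (graphOf X).Reachable u z) :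
    (graphOf (X.erase e)).Reachable u v :=
  (reachable_erase_or_exists_mem h e).resolve_right fun ⟨z, hz, huz⟩ =>
    he z hz (huz.mono (graphOf_mono (erase_subset e X)))

lemma graphOf_erase (e : Sym2 V) : graphOf (X.erase e) = (graphOf X).deleteEdges {e} := by
  ext u v
  simp only [graphOf, deleteEdges_adj, mem_erase, Set.mem_singleton_iff]
  tauto

end Graph

section Tree

variable {A : Finset (Sym2 V)}

omit [DecidableEq V] in
lemma IsTreeSol.reachable (hT : IsTreeSol A) {u v : V} (hu : u ∈ supp A) (hv : v ∈ supp A) :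
    (graphOf A).Reachable u v :=
  hT.2.2 u hu v hv

lemma IsTreeSol.not_reachable_erase (hT : IsTreeSol A) {e : Sym2 V} (he : e ∈ A) {u v : V}
    (hu : u ∈ e) (hv : v ∈ e) (huv : u ≠ v) : ¬ (graphOf (A.erase e)).Reachable u v := by
  obtain rfl := (Sym2.mem_and_mem_iff huv).mp ⟨hu, hv⟩
  rw [graphOf_erase, ← isBridge_iff]
  exact isAcyclic_iff_forall_adj_isBridge.mp hT.2.1 ⟨huv, he⟩

lemma IsTreeSol.exists_mem_reachable_erase (hT : IsTreeSol A) {e : Sym2 V} (he : e ∈ A) {v : V}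
    (hv : v ∈ supp A) : ∃ z ∈ e, (graphOf (A.erase e)).Reachable v z := by
  obtain ⟨u, hu⟩ : ∃ u, u ∈ e := ⟨_, Sym2.out_fst_mem e⟩
  exact (reachable_erase_or_exists_mem (hT.reachable hv ⟨e, he, hu⟩) e).elim
    (fun h => ⟨u, hu, h⟩) id

lemma IsTreeSol.reachable_erase_iff (hT : IsTreeSol A) {e : Sym2 V} (he : e ∈ A) {a u v : V}
    (ha : a ∈ e) (hu : u ∈ supp A) (hv : v ∈ supp A) :
    (graphOf (A.erase e)).Reachable u v ↔
      ((graphOf (A.erase e)).Reachable u a ↔ (graphOf (A.erase e)).Reachable v a) := by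
  refine ⟨fun h => ⟨h.symm.trans, h.trans⟩, fun h => ?_⟩
  obtain ⟨b, rfl⟩ := Sym2.mem_iff_exists.mp ha
  have hab : ¬ (graphOf (A.erase s(a, b))).Reachable a b :=
    hT.not_reachable_erase he (Sym2.mem_mk_left a b) (Sym2.mem_mk_right a b)
      fun hab => hT.1 _ he (Sym2.mk_isDiag_iff.mpr hab)
  obtain ⟨zu, hzu, hu⟩ := hT.exists_mem_reachable_erase he hu
  obtain ⟨zv, hzv, hv⟩ := hT.exists_mem_reachable_erase he hv
  rw [Sym2.mem_iff] at hzu hzv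
  rcases hzu with rfl | rfl <;> rcases hzv with rfl | rfl
  · exact hu.trans hv.symm
  · exact absurd ((h.mp hu).symm.trans hv) hab
  · exact absurd ((h.mpr hv).symm.trans hu) hab
  · exact hu.trans hv.symm

end Tree

section Exit

variable {A S : Finset (Sym2 V)}

/-- The first edge of `S` on the tree path from `x` to `v` separates them. -/
lemma IsTreeSol.exists_exit (hT : IsTreeSol A) {x v : V} (hxv : (graphOf A).Reachable x v)
    (h : ¬ (graphOf (A \ S)).Reachable x v) :
    ∃ k ∈ S, ∃ w ∈ k, (graphOf (A \ S)).Reachable x w ∧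
      ¬ (graphOf (A.erase k)).Reachable x v := by
  obtain ⟨p, hp⟩ := hxv.some.toPath
  clear hxv
  induction p with
  | nil => exact absurd .rfl h
  | @cons x z v hadj q ih =>
    rw [Walk.cons_isPath_iff] at hp
    by_cases hxz : s(x, z) ∈ S
    · refine ⟨s(x, z), hxz, x, Sym2.mem_mk_left x z, .rfl, fun hxv => ?_⟩
      have hzv : (graphOf (A.erase s(x, z))).Reachable z v := by
        rw [graphOf_erase]
        exact ⟨q.toDeleteEdge _ fun hq => hp.2 (q.fst_mem_support_of_mem_edges hq)⟩
      exact hT.not_reachable_erase hadj.2 (Sym2.mem_mk_left x z) (Sym2.mem_mk_right x z) hadj.1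
        (hxv.trans hzv.symm)
    · have hxz' : (graphOf (A \ S)).Reachable x z :=
        Adj.reachable ⟨hadj.1, mem_sdiff.mpr ⟨hadj.2, hxz⟩⟩
      obtain ⟨k, hk, w, hw, hzw, hzv⟩ := ih (fun hzv => h (hxz'.trans hzv)) hp.1
      refine ⟨k, hk, w, hw, hxz'.trans hzw, fun hxv => hzv ?_⟩
      have hxz'' : (graphOf (A.erase k)).Reachable x z :=
        Adj.reachable ⟨hadj.1, mem_erase.mpr ⟨fun h => hxz (h ▸ hk), hadj.2⟩⟩
      exact hxz''.symm.trans hxv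

lemma IsTreeSol.reachable_erase_or_reachable_erase (hT : IsTreeSol A) {h₁ h₂ : Sym2 V}
    (h₁A : h₁ ∈ A) (h₂A : h₂ ∈ A) (hne : h₁ ≠ h₂) {x w₁ w₂ v : V} (hw₁ : w₁ ∈ h₁) (hw₂ : w₂ ∈ h₂)
    (hxw₁ : (graphOf (A.erase h₂)).Reachable x w₁) (hxw₂ : (graphOf (A.erase h₁)).Reachable x w₂)
    (hv : v ∈ supp A) :
    (graphOf (A.erase h₁)).Reachable x v ∨ (graphOf (A.erase h₂)).Reachable x v := by
  obtain ⟨z, hz, hvz⟩ := hT.exists_mem_reachable_erase h₂A hv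
  rcases reachable_erase_or_exists_mem hvz h₁ with hvz | ⟨y, hy, hvy⟩
  · have hw₂z := reachable_of_mem_of_mem (mem_erase.mpr ⟨hne.symm, h₂A⟩) hw₂ hz
    exact .inl (hxw₂.trans (hw₂z.trans
      (hvz.mono (graphOf_mono (erase_subset_erase h₁ (erase_subset h₂ A)))).symm))
  · have hw₁y := reachable_of_mem_of_mem (mem_erase.mpr ⟨hne, h₁A⟩) hw₁ hy
    exact .inr (hxw₁.trans (hw₁y.trans (hvy.mono (graphOf_mono (erase_subset _ _))).symm))

lemma IsTreeSol.reachable_erase_of_not_reachable_erase (hT : IsTreeSol A) {h e : Sym2 V}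
    (hA : h ∈ A) (he : e ∈ A.erase h) {x v w : V} (hx : x ∈ e) (hv : v ∈ supp A)
    (hxv : ¬ (graphOf (A.erase h)).Reachable x v) (hw : w ∈ h) :
    (graphOf (A.erase e)).Reachable v w := by
  obtain ⟨z, hz, hvz⟩ := hT.exists_mem_reachable_erase hA hv
  rcases reachable_erase_or_exists_mem hvz e with hvz | ⟨y, hy, hvy⟩
  · have hzw := reachable_of_mem_of_mem
      (mem_erase.mpr ⟨fun heq => (mem_erase.mp he).1 heq.symm, hA⟩) hz hw
    exact (hvz.mono (graphOf_mono (erase_subset_erase e (erase_subset h A)))).trans hzw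
  · exact absurd ((reachable_of_mem_of_mem he hx hy).trans
      (hvy.mono (graphOf_mono (erase_subset _ _))).symm) hxv

end Exit

section Component

variable {A S : Finset (Sym2 V)} {e : Sym2 V} {x : V}

lemma reachable_erase_of_reachable_sdiff (he : e ∈ A \ S) {y u v : V} (hy : y ∈ e)
    (hxy : ¬ (graphOf (A \ S)).Reachable x y) (hxu : (graphOf (A \ S)).Reachable x u)
    (hxv : (graphOf (A \ S)).Reachable x v) : (graphOf (A.erase e)).Reachable u v := by
  have hxe : ∀ z ∈ e, ¬ (graphOf (A \ S)).Reachable x z := fun z hz hxz =>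
    hxy (hxz.trans (reachable_of_mem_of_mem he hz hy))
  have hsub : (A \ S).erase e ⊆ A.erase e := erase_subset_erase e sdiff_subset
  exact ((reachable_erase_of_forall_not_reachable hxu hxe).symm.trans
    (reachable_erase_of_forall_not_reachable hxv hxe)).mono (graphOf_mono hsub)

lemma IsTreeSol.exists_exits_of_not_reachable_erase (hT : IsTreeSol A) (hS : S ⊆ A)
    (he : e ∈ A \ S) (hx : x ∈ e) {u v : V} (hu : u ∈ supp A) (hv : v ∈ supp A)
    (hxu : ¬ (graphOf (A \ S)).Reachable x u) (hxv : ¬ (graphOf (A \ S)).Reachable x v)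
    (huv : ¬ (graphOf (A.erase e)).Reachable u v) :
    ∃ h₁ ∈ S, ∃ h₂ ∈ S, h₁ ≠ h₂ ∧ ∃ w₁ ∈ h₁, ∃ w₂ ∈ h₂,
      (graphOf (A \ S)).Reachable x w₁ ∧ (graphOf (A \ S)).Reachable x w₂ ∧
      ¬ (graphOf (A.erase e)).Reachable w₁ w₂ ∧ ¬ (graphOf (A.erase h₁)).Reachable u v := by
  have hxs : x ∈ supp A := ⟨e, (mem_sdiff.mp he).1, hx⟩
  obtain ⟨h₁, h₁S, w₁, hw₁, hxw₁, hxu₁⟩ := hT.exists_exit (hT.reachable hxs hu) hxu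
  obtain ⟨h₂, h₂S, w₂, hw₂, hxw₂, hxv₂⟩ := hT.exists_exit (hT.reachable hxs hv) hxv
  have side := fun {h z} (hh : h ∈ S) (hz : z ∈ supp A) hxz {w} (hw : w ∈ h) =>
    hT.reachable_erase_of_not_reachable_erase (hS hh) (mem_erase_of_mem_sdiff he hh) hx
      hz hxz hw
  have hne : h₁ ≠ h₂ := by
    rintro rfl
    exact huv ((side h₁S hu hxu₁ hw₁).trans (side h₁S hv hxv₂ hw₁).symm)
  refine ⟨h₁, h₁S, h₂, h₂S, hne, w₁, hw₁, w₂, hw₂, hxw₁, hxw₂, fun hw => huv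
    ((side h₁S hu hxu₁ hw₁).trans (hw.trans (side h₂S hv hxv₂ hw₂).symm)), fun huv₁ => ?_⟩
  rcases hT.reachable_erase_or_reachable_erase (hS h₁S) (hS h₂S) hne hw₁ hw₂
    (hxw₁.mono (graphOf_mono (sdiff_subset_erase_of_mem h₂S)))
    (hxw₂.mono (graphOf_mono (sdiff_subset_erase_of_mem h₁S))) hv with hxv₁ | hxv₂'
  · exact hxu₁ (hxv₁.trans huv₁.symm)
  · exact hxv₂ hxv₂'

lemma IsTreeSol.not_reachable_erase_of_exits (hT : IsTreeSol A) (hS : S ⊆ A)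
    (he : e ∈ A \ S) (hx : x ∈ e) {h₁ h₂ : Sym2 V} (h₁S : h₁ ∈ S) (h₂S : h₂ ∈ S) (hne : h₁ ≠ h₂)
    {w₁ w₂ : V} (hw₁ : w₁ ∈ h₁) (hw₂ : w₂ ∈ h₂) (hxw₁ : (graphOf (A \ S)).Reachable x w₁)
    (hxw₂ : (graphOf (A \ S)).Reachable x w₂) (hw : ¬ (graphOf (A.erase e)).Reachable w₁ w₂)
    {u v : V} (hu : u ∈ supp A) (hv : v ∈ supp A)
    (huv₁ : ¬ (graphOf (A.erase h₁)).Reachable u v)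
    (huv₂ : ¬ (graphOf (A.erase h₂)).Reachable u v) :
    ¬ (graphOf (A.erase e)).Reachable u v := by
  have side := fun {h z} (hh : h ∈ S) (hz : z ∈ supp A) hxz {w} (hw : w ∈ h) =>
    hT.reachable_erase_of_not_reachable_erase (hS hh) (mem_erase_of_mem_sdiff he hh) hx
      hz hxz hw
  have near := fun {z} (hz : z ∈ supp A) =>
    hT.reachable_erase_or_reachable_erase (hS h₁S) (hS h₂S) hne hw₁ hw₂
      (hxw₁.mono (graphOf_mono (sdiff_subset_erase_of_mem h₂S)))
      (hxw₂.mono (graphOf_mono (sdiff_subset_erase_of_mem h₁S))) hz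
  have beyond : ∀ {h}, ¬ (graphOf (A.erase h)).Reachable u v →
      ¬ (graphOf (A.erase h)).Reachable x u ∨ ¬ (graphOf (A.erase h)).Reachable x v := by
    intro h huv
    by_contra! hh
    exact huv (hh.1.symm.trans hh.2)
  intro huv
  rcases beyond huv₁ with hu₁ | hv₁ <;> rcases beyond huv₂ with hu₂ | hv₂
  · exact (near hu).elim hu₁ hu₂
  · exact hw ((side h₁S hu hu₁ hw₁).symm.trans (huv.trans (side h₂S hv hv₂ hw₂)))
  · exact hw ((side h₁S hv hv₁ hw₁).symm.trans (huv.symm.trans (side h₂S hu hu₂ hw₂)))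
  · exact (near hv).elim hv₁ hv₂

end Component

section Compatibility

variable {A F : Finset (Sym2 V)} {e f : Sym2 V} {a b c d : V}

/-- `e = s(a, b)` and `f = s(c, d)` with `b` and `c` joined in `A \ {e, f}`, so that
`T_{e,f}` is the component of `b` (and `c`). -/
structure IsOrientation (A : Finset (Sym2 V)) (e f : Sym2 V) (a b c d : V) : Prop where
  a_mem : a ∈ e
  b_mem : b ∈ e
  a_ne_b : a ≠ b
  c_mem : c ∈ f
  d_mem : d ∈ f
  c_ne_d : c ≠ d
  reachable : (graphOf (A \ {e, f})).Reachable b c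

lemma IsOrientation.symm (ho : IsOrientation A e f a b c d) : IsOrientation A f e d c b a :=
  ⟨ho.d_mem, ho.c_mem, ho.c_ne_d.symm, ho.b_mem, ho.a_mem, ho.a_ne_b.symm,
    pair_comm f e ▸ ho.reachable.symm⟩

lemma IsTreeSol.exists_isOrientation (hT : IsTreeSol A) (he : e ∈ A) (hf : f ∈ A) :
    ∃ a b c d, IsOrientation A e f a b c d := by
  obtain ⟨u, hu⟩ : ∃ u, u ∈ f := ⟨_, Sym2.out_fst_mem f⟩
  obtain ⟨b, hb, hub⟩ := hT.exists_mem_reachable_erase he ⟨f, hf, hu⟩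
  obtain ⟨c, hc, hbc⟩ : ∃ c ∈ f, (graphOf (A \ {e, f})).Reachable b c := by
    rw [sdiff_pair_eq_erase_erase]
    exact (reachable_erase_or_exists_mem hub.symm f).elim (fun h => ⟨u, hu, h⟩) id
  obtain ⟨a, rfl⟩ := Sym2.mem_iff_exists.mp hb
  obtain ⟨d, rfl⟩ := Sym2.mem_iff_exists.mp hc
  exact ⟨a, b, c, d, Sym2.mem_mk_right b a, Sym2.mem_mk_left b a,
    fun h => hT.1 _ he (Sym2.mk_isDiag_iff.mpr h.symm), Sym2.mem_mk_left c d,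
    Sym2.mem_mk_right c d, fun h => hT.1 _ hf (Sym2.mk_isDiag_iff.mpr h), hbc⟩

lemma IsTreeSol.not_reachable_sdiff_pair (hT : IsTreeSol A) (he : e ∈ A) (hf : f ∈ A)
    (hef : e ≠ f) (ho : IsOrientation A e f a b c d) {y : V} (hy : y ∈ f) :
    ¬ (graphOf (A \ {e, f})).Reachable a y := fun hay => by
  have hyc := reachable_of_mem_of_mem (mem_erase.mpr ⟨hef.symm, hf⟩) hy ho.c_mem
  exact hT.not_reachable_erase he ho.a_mem ho.b_mem ho.a_ne_b
    ((hay.mono (graphOf_mono sdiff_pair_subset_erase)).trans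
      (hyc.trans (ho.reachable.mono (graphOf_mono sdiff_pair_subset_erase)).symm))

lemma IsTreeSol.reachable_erase_iff_reachable_sdiff_pair (hT : IsTreeSol A) (he : e ∈ A)
    (hf : f ∈ A) (hef : e ≠ f) (ho : IsOrientation A e f a b c d) (w : V) :
    (graphOf (A.erase e)).Reachable w a ↔ (graphOf (A \ {e, f})).Reachable w a := by
  refine ⟨fun hwa => ?_, fun hwa => hwa.mono (graphOf_mono sdiff_pair_subset_erase)⟩
  rcases reachable_erase_or_exists_mem hwa.symm f with haw | ⟨y, hy, hay⟩
  · rw [sdiff_pair_eq_erase_erase]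
    exact haw.symm
  · rw [← sdiff_pair_eq_erase_erase] at hay
    exact absurd hay (hT.not_reachable_sdiff_pair he hf hef ho hy)

lemma IsTreeSol.mem_midComp_iff (hT : IsTreeSol A) (he : e ∈ A) (hf : f ∈ A) (hef : e ≠ f)
    (ho : IsOrientation A e f a b c d) (w : V) :
    w ∈ midComp A e f ↔ (graphOf (A \ {e, f})).Reachable w b := by
  refine ⟨fun ⟨z, hz, y, hy, hzy, hzw⟩ => ?_,
    fun hwb => ⟨b, ho.b_mem, c, ho.c_mem, ho.reachable, hwb.symm⟩⟩
  rw [(Sym2.mem_and_mem_iff ho.a_ne_b).mp ⟨ho.a_mem, ho.b_mem⟩, Sym2.mem_iff] at hz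
  rcases hz with rfl | rfl
  · exact absurd hzy (hT.not_reachable_sdiff_pair he hf hef ho hy)
  · exact hzw.symm

lemma IsTreeSol.reachable_sdiff_pair_or (hT : IsTreeSol A) (he : e ∈ A)
    (ho : IsOrientation A e f a b c d) {w : V} (hw : w ∈ supp A) :
    (graphOf (A \ {e, f})).Reachable w a ∨ (graphOf (A \ {e, f})).Reachable w b ∨
      (graphOf (A \ {e, f})).Reachable w d := by
  obtain ⟨z, hz, hwz⟩ := hT.exists_mem_reachable_erase he hw
  rcases reachable_erase_or_exists_mem hwz f with hwz | ⟨y, hy, hwy⟩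
  · rw [← sdiff_pair_eq_erase_erase] at hwz
    rw [(Sym2.mem_and_mem_iff ho.a_ne_b).mp ⟨ho.a_mem, ho.b_mem⟩, Sym2.mem_iff] at hz
    rcases hz with rfl | rfl
    · exact .inl hwz
    · exact .inr (.inl hwz)
  · rw [← sdiff_pair_eq_erase_erase] at hwy
    rw [(Sym2.mem_and_mem_iff ho.c_ne_d).mp ⟨ho.c_mem, ho.d_mem⟩, Sym2.mem_iff] at hy
    rcases hy with rfl | rfl
    · exact .inr (.inl (hwy.trans ho.reachable.symm))
    · exact .inr (.inr hwy)

lemma IsTreeSol.reachable_erase_iff_iff_mem_midComp (hT : IsTreeSol A) (he : e ∈ A) (hf : f ∈ A)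
    (hef : e ≠ f) {u v : V} (hu : u ∈ supp A) (hv : v ∈ supp A) :
    ((graphOf (A.erase e)).Reachable u v ↔ (graphOf (A.erase f)).Reachable u v) ↔
      (u ∈ midComp A e f ↔ v ∈ midComp A e f) := by
  obtain ⟨a, b, c, d, ho⟩ := hT.exists_isOrientation he hf
  have hside_a := hT.reachable_erase_iff_reachable_sdiff_pair he hf hef ho
  have hside_d := hT.reachable_erase_iff_reachable_sdiff_pair hf he hef.symm ho.symm
  rw [pair_comm] at hside_d
  rw [hT.reachable_erase_iff he ho.a_mem hu hv, hT.reachable_erase_iff hf ho.d_mem hu hv,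
    hside_a, hside_a, hside_d, hside_d, hT.mem_midComp_iff he hf hef ho,
    hT.mem_midComp_iff he hf hef ho]
  set D := graphOf (A \ {e, f})
  have hab : ¬ D.Reachable a b := fun h => hT.not_reachable_erase he ho.a_mem ho.b_mem ho.a_ne_b
    (h.mono (graphOf_mono sdiff_pair_subset_erase))
  have hbd : ¬ D.Reachable b d := fun h => hT.not_reachable_sdiff_pair hf he hef.symm ho.symm
    ho.b_mem (by rw [pair_comm]; exact h.symm)
  have had : ¬ D.Reachable a d := hT.not_reachable_sdiff_pair he hf hef ho ho.d_mem
  have regions : ∀ w ∈ supp A, (D.Reachable w a ∨ D.Reachable w b ∨ D.Reachable w d) ∧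
      ¬ (D.Reachable w a ∧ D.Reachable w b) ∧ ¬ (D.Reachable w b ∧ D.Reachable w d) ∧
      ¬ (D.Reachable w a ∧ D.Reachable w d) := fun w hw =>
    ⟨hT.reachable_sdiff_pair_or he ho hw, fun h => hab (h.1.symm.trans h.2),
      fun h => hbd (h.1.symm.trans h.2), fun h => had (h.1.symm.trans h.2)⟩
  -- `A \ {e, f}` splits `V[A]` into the sides of `a`, `b` and `d`; `e` cuts off the first and
  -- `f` the last, so the claim is propositional in the six reachabilities from `u` and `v`.
  have := regions u hu
  have := regions v hv
  grind

end Compatibility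

section Classes

variable {A F : Finset (Sym2 V)} {e f e₀ e₀' : Sym2 V}

lemma IsTreeSol.compatible_iff (hT : IsTreeSol A) (hFA : supp F ⊆ supp A) (he : e ∈ A)
    (hf : f ∈ A) :
    Compatible A F e f ↔ ∀ u v, s(u, v) ∈ F →
      ((graphOf (A.erase e)).Reachable u v ↔ (graphOf (A.erase f)).Reachable u v) := by
  obtain rfl | hef := eq_or_ne e f
  · exact iff_of_true (.inl rfl) fun _ _ _ => .rfl
  have hmid : ∀ {u v}, s(u, v) ∈ F → (((graphOf (A.erase e)).Reachable u v ↔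
      (graphOf (A.erase f)).Reachable u v) ↔ (u ∈ midComp A e f ↔ v ∈ midComp A e f)) :=
    fun huv => hT.reachable_erase_iff_iff_mem_midComp he hf hef
      (hFA (left_mem_supp huv)) (hFA (right_mem_supp huv))
  simp only [Compatible, hef, false_or, leavesSet, not_exists, not_and, not_not]
  constructor
  · intro h u v huv
    rw [hmid huv]
    exact ⟨h _ huv u v rfl, h _ huv v u Sym2.eq_swap⟩
  · rintro h _ huv u v rfl hu
    exact ((hmid huv).mp (h u v huv)).mp hu

lemma IsTreeSol.mem_cls_iff (hT : IsTreeSol A) (hFA : supp F ⊆ supp A) (he : e ∈ A) :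
    f ∈ cls A F e ↔ f ∈ A ∧ ∀ u v, s(u, v) ∈ F →
      ((graphOf (A.erase e)).Reachable u v ↔ (graphOf (A.erase f)).Reachable u v) := by
  rw [cls, mem_filter]
  exact and_congr_right fun hf => hT.compatible_iff hFA he hf

lemma self_mem_cls (he : e ∈ A) : e ∈ cls A F e :=
  mem_filter.mpr ⟨he, .inl rfl⟩

lemma IsTreeSol.reachable_erase_iff_of_mem_cls (hT : IsTreeSol A) (hFA : supp F ⊆ supp A)
    (he₀ : e₀ ∈ A) (he : e ∈ cls A F e₀) (hf : f ∈ cls A F e₀) {u v : V} (huv : s(u, v) ∈ F) :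
    (graphOf (A.erase e)).Reachable u v ↔ (graphOf (A.erase f)).Reachable u v :=
  (((hT.mem_cls_iff hFA he₀).mp he).2 u v huv).symm.trans
    (((hT.mem_cls_iff hFA he₀).mp hf).2 u v huv)

lemma IsTreeSol.disjoint_cls (hT : IsTreeSol A) (hFA : supp F ⊆ supp A) (he₀ : e₀ ∈ A)
    (he₀' : e₀' ∈ A) (hne : cls A F e₀ ≠ cls A F e₀') : Disjoint (cls A F e₀) (cls A F e₀') := by
  refine disjoint_left.mpr fun z hz hz' => hne (ext fun f => ?_)
  rw [hT.mem_cls_iff hFA he₀, hT.mem_cls_iff hFA he₀']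
  refine and_congr_right fun _ => forall₃_congr fun u v huv => ?_
  rw [(((hT.mem_cls_iff hFA he₀).mp hz).2 u v huv).trans
    (((hT.mem_cls_iff hFA he₀').mp hz').2 u v huv).symm]

lemma safe_iff : Safe A F e ↔ ∃ u v, s(u, v) ∈ F ∧ ¬ (graphOf (A.erase e)).Reachable u v :=
  ⟨fun ⟨_, hg, u, v, hguv, _, huv⟩ => ⟨u, v, hguv ▸ hg, huv⟩,
    fun ⟨u, v, hg, huv⟩ => ⟨_, hg, u, v, rfl, fun h => huv (h ▸ .rfl), huv⟩⟩

lemma IsTreeSol.safe_of_mem_cls (hT : IsTreeSol A) (hFA : supp F ⊆ supp A) (he₀ : e₀ ∈ A)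
    (hu : cls A F e₀ ≠ unsafeCls A F) (he : e ∈ cls A F e₀) : Safe A F e := by
  by_contra he_unsafe
  have hcut : ∀ u v, s(u, v) ∈ F → (graphOf (A.erase e₀)).Reachable u v := fun u v huv =>
    (((hT.mem_cls_iff hFA he₀).mp he).2 u v huv).mpr
      (not_not.mp fun h => he_unsafe (safe_iff.mpr ⟨u, v, huv, h⟩))
  refine hu (ext fun f => ?_)
  rw [hT.mem_cls_iff hFA he₀, unsafeCls, mem_filter, safe_iff]
  refine and_congr_right fun _ => ?_
  simp only [not_exists, not_and, not_not]
  exact forall₃_congr fun u v huv => iff_true_left (hcut u v huv)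

end Classes

section Position

variable {A F : Finset (Sym2 V)} {e₀ e₀' : Sym2 V}

lemma IsTreeSol.reachable_sdiff_cls_of_innerComp (hT : IsTreeSol A) (hFA : supp F ⊆ supp A)
    (he₀ : e₀ ∈ A) {x : V}
    (hx : innerComp A (cls A F e₀) ((graphOf (A \ cls A F e₀)).connectedComponentMk x))
    {u v : V} (huv : s(u, v) ∈ F) (hxu : (graphOf (A \ cls A F e₀)).Reachable x u) :
    (graphOf (A \ cls A F e₀)).Reachable x v := by
  obtain ⟨f, hf, g, hg, hfg, ⟨wf, hwf, hxf⟩, wg, hwg, hxg⟩ := hx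
  rw [ConnectedComponent.eq] at hxf hxg
  have hS : cls A F e₀ ⊆ A := filter_subset _ _
  have hv : v ∈ supp A := hFA (right_mem_supp huv)
  by_contra hxv
  obtain ⟨k, hk, -, -, -, hkv⟩ := hT.exists_exit ((hxu.mono (graphOf_mono sdiff_subset)).trans
    (hT.reachable (hFA (left_mem_supp huv)) hv)) hxv
  have hxu_erase : ∀ h ∈ cls A F e₀, (graphOf (A.erase h)).Reachable x u := fun h hh =>
    hxu.mono (graphOf_mono (sdiff_subset_erase_of_mem hh))
  -- `k` cuts `u v`, hence so does every edge of its class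
  have hcut : ∀ h ∈ cls A F e₀, ¬ (graphOf (A.erase h)).Reachable x v := fun h hh hxv' =>
    hkv ((hxu_erase k hk).trans ((hT.reachable_erase_iff_of_mem_cls hFA he₀ hh hk huv).mp
      ((hxu_erase h hh).symm.trans hxv')))
  exact (hT.reachable_erase_or_reachable_erase (hS hf) (hS hg) hfg hwf hwg
    (hxf.symm.mono (graphOf_mono (sdiff_subset_erase_of_mem hg)))
    (hxg.symm.mono (graphOf_mono (sdiff_subset_erase_of_mem hf))) hv).elim (hcut f hf) (hcut g hg)

/-- Otherwise every `F`-edge cut by `e` would leave the component of `x` through two edges of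
`S` on either side of `e`; comparing with these, `e` would cut exactly the `F`-edges cut by `S`,
i.e. `e ∈ S`. -/
lemma IsTreeSol.exists_reachable_sdiff_of_safe (hT : IsTreeSol A) (hFA : supp F ⊆ supp A)
    (he₀ : e₀ ∈ A) {e : Sym2 V} (he : e ∈ A \ cls A F e₀) {x : V} (hx : x ∈ e)
    (hsafe : Safe A F e) :
    ∃ u v, s(u, v) ∈ F ∧ ¬ (graphOf (A.erase e)).Reachable u v ∧
      (graphOf (A \ cls A F e₀)).Reachable x u := by
  set S := cls A F e₀
  by_contra! hout
  have hS : S ⊆ A := filter_subset _ _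
  have exits := fun {u v} (huv : s(u, v) ∈ F) (hcut : ¬ (graphOf (A.erase e)).Reachable u v) =>
    hT.exists_exits_of_not_reachable_erase hS he hx (hFA (left_mem_supp huv))
      (hFA (right_mem_supp huv)) (hout u v huv hcut)
      (hout v u (Sym2.eq_swap ▸ huv) fun h => hcut h.symm) hcut
  obtain ⟨r, t, hrt, hcut⟩ := safe_iff.mp hsafe
  obtain ⟨h₁, h₁S, h₂, h₂S, h₁₂, w₁, hw₁, w₂, hw₂, hxw₁, hxw₂, hw, -⟩ := exits hrt hcut
  refine (mem_sdiff.mp he).2 ((hT.mem_cls_iff hFA he₀).mpr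
    ⟨(mem_sdiff.mp he).1, fun u v huv => ?_⟩)
  have hcls := fun {h} (hh : h ∈ S) =>
    hT.reachable_erase_iff_of_mem_cls hFA he₀ hh (self_mem_cls he₀) huv
  rw [← not_iff_not]
  constructor
  · intro hcut₀
    exact hT.not_reachable_erase_of_exits hS he hx h₁S h₂S h₁₂ hw₁ hw₂ hxw₁ hxw₂ hw
      (hFA (left_mem_supp huv)) (hFA (right_mem_supp huv)) (by rwa [hcls h₁S])
      (by rwa [hcls h₂S])
  · intro hcut
    obtain ⟨h, hh, -, -, -, -, -, -, -, -, -, -, hcut_h⟩ := exits huv hcut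
    rwa [hcls hh] at hcut_h

lemma IsTreeSol.reachable_of_innerComp_of_mem_cls (hT : IsTreeSol A) (hFA : supp F ⊆ supp A)
    (he₀ : e₀ ∈ A) (he₀' : e₀' ∈ A) (hSu' : cls A F e₀' ≠ unsafeCls A F)
    (hne : cls A F e₀ ≠ cls A F e₀') {e e' : Sym2 V} (he : e ∈ cls A F e₀')
    (he' : e' ∈ cls A F e₀') {x y : V} (hx : x ∈ e) (hy : y ∈ e')
    (hinner : innerComp A (cls A F e₀) ((graphOf (A \ cls A F e₀)).connectedComponentMk x)) :
    (graphOf (A \ cls A F e₀)).Reachable x y := by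
  have hAS : ∀ {g}, g ∈ cls A F e₀' → g ∈ A \ cls A F e₀ := fun hg => mem_sdiff.mpr
    ⟨(mem_filter.mp hg).1, disjoint_right.mp (hT.disjoint_cls hFA he₀ he₀' hne) hg⟩
  by_contra hxy
  obtain ⟨u, v, huv, hcut, hxu⟩ := hT.exists_reachable_sdiff_of_safe hFA he₀ (hAS he) hx
    (hT.safe_of_mem_cls hFA he₀' hSu' he)
  rw [hT.reachable_erase_iff_of_mem_cls hFA he₀' he he' huv] at hcut
  exact hcut (reachable_erase_of_reachable_sdiff (hAS he') hy hxy hxu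
    (hT.reachable_sdiff_cls_of_innerComp hFA he₀ hinner huv hxu))

end Position

end

theorem stmt12_class_position_general
    (A F : Finset (Sym2 V))
    (hAtree : IsTreeSol A) (hsupp : supp A = supp F)
    (e₀ e₀' : Sym2 V) (he₀ : e₀ ∈ A) (he₀' : e₀' ∈ A)
    (hSu' : cls A F e₀' ≠ unsafeCls A F)
    (hne : cls A F e₀ ≠ cls A F e₀') :
    Xor'
      (∀ e' ∈ cls A F e₀', ∀ x ∈ e',
        ¬ innerComp A (cls A F e₀) ((graphOf (A \ cls A F e₀)).connectedComponentMk x))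
      (∃ c : (graphOf (A \ cls A F e₀)).ConnectedComponent, innerComp A (cls A F e₀) c ∧
        ∀ e' ∈ cls A F e₀', ∀ x ∈ e',
          (graphOf (A \ cls A F e₀)).connectedComponentMk x = c) := by
  refine xor_iff_iff_not.mpr ⟨fun hP ⟨c, hc, hall⟩ => ?_, fun hQ => ?_⟩
  · obtain ⟨x, hx⟩ : ∃ x, x ∈ e₀' := ⟨_, Sym2.out_fst_mem e₀'⟩
    exact hP e₀' (self_mem_cls he₀') x hx (hall e₀' (self_mem_cls he₀') x hx ▸ hc)
  · intro e he x hx hinner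
    refine hQ ⟨_, hinner, fun e' he' y hy => ConnectedComponent.eq.mpr ?_⟩
    exact (hAtree.reachable_of_innerComp_of_mem_cls hsupp.ge he₀ he₀' hSu' hne he he' hx hy
      hinner).symm

theorem stmt12_class_position
    (T : Finset (V × V)) (A F : Finset (Sym2 V))
    (hAfeas : Feasible A T) (hFfeas : Feasible F T)
    (hAtree : IsTreeSol A) (hsupp : supp A = supp F)
    (e₀ e₀' : Sym2 V) (he₀ : e₀ ∈ A) (he₀' : e₀' ∈ A)
    (hSu : cls A F e₀ ≠ unsafeCls A F) (hSu' : cls A F e₀' ≠ unsafeCls A F)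
    (hne : cls A F e₀ ≠ cls A F e₀') :
    Xor'
      (∀ e' ∈ cls A F e₀', ∀ x ∈ e',
        ¬ innerComp A (cls A F e₀) ((graphOf (A \ cls A F e₀)).connectedComponentMk x))
      (∃ c : (graphOf (A \ cls A F e₀)).ConnectedComponent, innerComp A (cls A F e₀) c ∧
        ∀ e' ∈ cls A F e₀', ∀ x ∈ e',
          (graphOf (A \ cls A F e₀)).connectedComponentMk x = c) :=
  stmt12_class_position_general A F hAtree hsupp e₀ e₀' he₀ he₀' hSu' hne
end

section
/- Let A be a feasible Steiner forest with components A_1,…,A_p numbered by nondecreasing width, and assume A is c-approximate connecting move optimal. Let C=(v_1,…,v_l) be a circuit in G_A with edges (e_1,…,e_l). If C is minimally guarded, then Σ_{i=2}^{l−1} w(A_{v_i}) ≤ c·Σ_{i=1}^{l} d_{e_i} = c·d(C). -/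
open Finset

attribute [local instance] Classical.propDecidable

variable {V : Type*} [Fintype V] [DecidableEq V]

/-!
Every tree `B` of `G_A` made of circuit edges satisfies `Σ_{V[B]} w - max w ≤ c·d(B)`. Delete
an inner node `v_q` of smallest index from the circuit: its two neighbours have larger indices
(by minimality they differ from it), and the two circuit edges at `v_q` are replaced by one
virtual edge costing their joint cost minus `w(v_q)`. A tree through the virtual edge unfolds
into trees of real edges that gain exactly `w(v_q)`: subdivide the virtual edge at `v_q` if
`v_q` is not yet in the tree, and otherwise keep the one real edge that reconnects the tree
and use the other as a tree of its own. So the shortened circuit, with the new costs, again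
satisfies the tree bound, and induction on its length ends with a circuit without inner nodes.
-/

open Relation

namespace Multigraph

variable {ι β : Type*}

/-- A multigraph on `β` is a set `I : Finset ι` of arcs with endpoints `ends`; loops and
parallel arcs are allowed. -/
def Linked (ends : ι → Sym2 β) (I : Finset ι) (s t : β) : Prop := ∃ i ∈ I, ends i = s(s, t)

variable {ends : ι → Sym2 β}

lemma Linked.symm {I : Finset ι} {s t : β} (h : Linked ends I s t) : Linked ends I t s := by
  obtain ⟨i, hi, he⟩ := h
  exact ⟨i, hi, he.trans Sym2.eq_swap⟩

lemma Linked.mono {I J : Finset ι} (hIJ : I ⊆ J) {s t : β} (h : Linked ends I s t) :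
    Linked ends J s t := by
  obtain ⟨i, hi, he⟩ := h
  exact ⟨i, hIJ hi, he⟩

lemma reflTransGen_linked_of_mem {I : Finset ι} {i : ι} (hi : i ∈ I) {s t : β}
    (h : ends i = s(s, t)) : ReflTransGen (Linked ends I) s t :=
  .single ⟨i, hi, h⟩

lemma reflTransGen_linked_symm {I : Finset ι} {s t : β}
    (h : ReflTransGen (Linked ends I) s t) : ReflTransGen (Linked ends I) t s := by
  induction h with
  | refl => exact .refl
  | tail _ hst ih => exact .head hst.symm ih

lemma reflTransGen_linked_mono {I J : Finset ι} (hIJ : I ⊆ J) {s t : β}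
    (h : ReflTransGen (Linked ends I) s t) : ReflTransGen (Linked ends J) s t :=
  ReflTransGen.mono (fun _ _ => Linked.mono hIJ) _ _ h

lemma reflTransGen_linked_of_insert [DecidableEq ι] {J : Finset ι} {g : ι} {x y z : β}
    (hg : ends g = s(x, y)) (h : ReflTransGen (Linked ends (insert g J)) x z) :
    ReflTransGen (Linked ends J) z x ∨ ReflTransGen (Linked ends J) z y := by
  induction h with
  | refl => exact .inl .refl
  | @tail w w' _ hww' ih =>
    obtain ⟨i, hi, he⟩ := hww'
    rcases mem_insert.1 hi with rfl | hi
    · rw [hg, Sym2.eq_iff] at he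
      rcases he with ⟨-, rfl⟩ | ⟨rfl, -⟩
      · exact .inr .refl
      · exact .inl .refl
    · exact ih.imp (.head ⟨i, hi, he.trans Sym2.eq_swap⟩) (.head ⟨i, hi, he.trans Sym2.eq_swap⟩)

variable [DecidableEq β]

def verts (ends : ι → Sym2 β) (I : Finset ι) : Finset β := I.biUnion fun i => (ends i).toFinset

def IsTree (ends : ι → Sym2 β) (I : Finset ι) : Prop :=
  (verts ends I).card = I.card + 1 ∧
    ∀ s ∈ verts ends I, ∀ t ∈ verts ends I, ReflTransGen (Linked ends I) s t

@[simp]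
lemma mem_verts {I : Finset ι} {t : β} : t ∈ verts ends I ↔ ∃ i ∈ I, t ∈ ends i := by
  simp [verts]

lemma mem_verts_iff_of_eq {l r : ι → β} {I : Finset ι} (h : ∀ i ∈ I, ends i = s(l i, r i))
    {t : β} : t ∈ verts ends I ↔ ∃ i ∈ I, t = l i ∨ t = r i := by
  simp only [mem_verts]
  constructor
  · rintro ⟨i, hi, ht⟩
    exact ⟨i, hi, by rwa [h i hi, Sym2.mem_iff] at ht⟩
  · rintro ⟨i, hi, ht⟩
    exact ⟨i, hi, by rwa [h i hi, Sym2.mem_iff]⟩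

lemma verts_singleton {i : ι} {x y : β} (h : ends i = s(x, y)) : verts ends {i} = {x, y} := by
  simp [verts, h, Sym2.toFinset_mk_eq]

lemma mem_verts_of_reflTransGen {I : Finset ι} {s t : β}
    (h : ReflTransGen (Linked ends I) s t) (hst : s ≠ t) : t ∈ verts ends I := by
  obtain rfl | ⟨_, _, i, hi, he⟩ := h.cases_tail
  · exact absurd rfl hst
  · exact mem_verts.2 ⟨i, hi, he ▸ Sym2.mem_mk_right _ _⟩

lemma reflTransGen_of_hub {I : Finset ι} {h : β}
    (hub : ∀ s ∈ verts ends I, ReflTransGen (Linked ends I) s h) :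
    ∀ s ∈ verts ends I, ∀ t ∈ verts ends I, ReflTransGen (Linked ends I) s t :=
  fun s hs t ht => (hub s hs).trans (reflTransGen_linked_symm (hub t ht))

lemma isTree_singleton {i : ι} {x y : β} (h : ends i = s(x, y)) (hxy : x ≠ y) :
    IsTree ends {i} := by
  refine ⟨by simp [verts_singleton h, hxy], reflTransGen_of_hub (h := y) fun s hs => ?_⟩
  rw [verts_singleton h, mem_insert, mem_singleton] at hs
  rcases hs with rfl | rfl
  · exact reflTransGen_linked_of_mem (mem_singleton_self i) h
  · exact .refl

variable [DecidableEq ι] {J : Finset ι} {g g₁ g₂ : ι} {x y z : β}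

lemma IsTree.subdivide (hT : IsTree ends (insert g J)) (hgJ : g ∉ J) (hg : ends g = s(x, y))
    (h₁ : ends g₁ = s(x, z)) (h₂ : ends g₂ = s(z, y)) (hg₁ : g₁ ∉ J) (hg₂ : g₂ ∉ J)
    (h₁₂ : g₁ ≠ g₂) (hz : z ∉ verts ends (insert g J)) :
    IsTree ends (insert g₁ (insert g₂ J)) ∧
      verts ends (insert g₁ (insert g₂ J)) = insert z (verts ends (insert g J)) := by
  have hverts : verts ends (insert g₁ (insert g₂ J)) = insert z (verts ends (insert g J)) := by
    ext t
    simp only [mem_verts, mem_insert, exists_eq_or_imp, h₁, h₂, hg, Sym2.mem_iff]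
    tauto
  refine ⟨⟨?_, reflTransGen_of_hub (h := z) fun s hs => ?_⟩, hverts⟩
  · have hg₁' : g₁ ∉ insert g₂ J := by simp [h₁₂, hg₁]
    rw [hverts, card_insert_of_notMem hz, hT.1, card_insert_of_notMem hg₁',
      card_insert_of_notMem hg₂, card_insert_of_notMem hgJ]
  have hJ : J ⊆ insert g₁ (insert g₂ J) := (subset_insert _ _).trans (subset_insert _ _)
  have hxz : ReflTransGen (Linked ends (insert g₁ (insert g₂ J))) x z :=
    reflTransGen_linked_of_mem (mem_insert_self _ _) h₁
  have hyz : ReflTransGen (Linked ends (insert g₁ (insert g₂ J))) y z :=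
    reflTransGen_linked_of_mem (mem_insert_of_mem (mem_insert_self _ _)) (h₂.trans Sym2.eq_swap)
  rw [hverts, mem_insert] at hs
  rcases hs with rfl | hs
  · exact .refl
  have hx : x ∈ verts ends (insert g J) := mem_verts.2 ⟨g, mem_insert_self _ _, by simp [hg]⟩
  rcases reflTransGen_linked_of_insert hg (hT.2 x hx s hs) with h | h
  · exact (reflTransGen_linked_mono hJ h).trans hxz
  · exact (reflTransGen_linked_mono hJ h).trans hyz

lemma IsTree.reroute (hT : IsTree ends (insert g J)) (hgJ : g ∉ J) (hg : ends g = s(x, y))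
    (h₂ : ends g₂ = s(z, y)) (hg₂ : g₂ ∉ J) (hzx : ReflTransGen (Linked ends J) z x) :
    IsTree ends (insert g₂ J) ∧ verts ends (insert g₂ J) = verts ends (insert g J) := by
  have hverts : verts ends (insert g₂ J) = verts ends (insert g J) := by
    by_cases hzx' : z = x
    · subst hzx'
      ext t
      simp only [mem_verts, mem_insert, exists_eq_or_imp, h₂, hg]
    have hz := mem_verts_of_reflTransGen (reflTransGen_linked_symm hzx) (Ne.symm hzx')
    have hx := mem_verts_of_reflTransGen hzx hzx'
    ext t
    simp only [mem_verts, mem_insert, exists_eq_or_imp, h₂, hg, Sym2.mem_iff] at hz hx ⊢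
    constructor
    · rintro ((rfl | rfl) | h)
      · exact .inr hz
      · exact .inl (.inr rfl)
      · exact .inr h
    · rintro ((rfl | rfl) | h)
      · exact .inr hx
      · exact .inl (.inr rfl)
      · exact .inr h
  refine ⟨⟨?_, reflTransGen_of_hub (h := y) fun s hs => ?_⟩, hverts⟩
  · rw [hverts, hT.1, card_insert_of_notMem hg₂, card_insert_of_notMem hgJ]
  have hJ : J ⊆ insert g₂ J := subset_insert _ _
  rw [hverts] at hs
  have hx : x ∈ verts ends (insert g J) := mem_verts.2 ⟨g, mem_insert_self _ _, by simp [hg]⟩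
  rcases reflTransGen_linked_of_insert hg (hT.2 x hx s hs) with h | h
  · exact (reflTransGen_linked_mono hJ (h.trans (reflTransGen_linked_symm hzx))).trans
      (reflTransGen_linked_of_mem (mem_insert_self _ _) h₂)
  · exact reflTransGen_linked_mono hJ h

end Multigraph

open Multigraph

section ConsecutivePairs

noncomputable def consecutivePairs (Q : Finset ℕ) : Finset (ℕ × ℕ) :=
  (Q ×ˢ Q).filter fun e => e.1 < e.2 ∧ ∀ s ∈ Q, ¬ (e.1 < s ∧ s < e.2)

@[simp]
lemma mem_consecutivePairs {Q : Finset ℕ} {p r : ℕ} :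
    (p, r) ∈ consecutivePairs Q ↔ p ∈ Q ∧ r ∈ Q ∧ p < r ∧ ∀ s ∈ Q, ¬ (p < s ∧ s < r) := by
  simp [consecutivePairs, and_assoc]

lemma exists_consecutive_left {Q : Finset ℕ} {p q : ℕ} (hp : p ∈ Q) (hq : q ∈ Q) (hpq : p < q) :
    ∃ x, (x, q) ∈ consecutivePairs Q := by
  have hne : (Q.filter (· < q)).Nonempty := ⟨p, mem_filter.2 ⟨hp, hpq⟩⟩
  obtain ⟨hx, hxq⟩ := mem_filter.1 ((Q.filter (· < q)).max'_mem hne)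
  refine ⟨_, mem_consecutivePairs.2 ⟨hx, hq, hxq, fun s hs ⟨hxs, hsq⟩ => ?_⟩⟩
  exact (le_max' _ s (mem_filter.2 ⟨hs, hsq⟩)).not_gt hxs

lemma exists_consecutive_right {Q : Finset ℕ} {q r : ℕ} (hq : q ∈ Q) (hr : r ∈ Q) (hqr : q < r) :
    ∃ y, (q, y) ∈ consecutivePairs Q := by
  have hne : (Q.filter (q < ·)).Nonempty := ⟨r, mem_filter.2 ⟨hr, hqr⟩⟩
  obtain ⟨hy, hqy⟩ := mem_filter.1 ((Q.filter (q < ·)).min'_mem hne)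
  refine ⟨_, mem_consecutivePairs.2 ⟨hq, hy, hqy, fun s hs ⟨hqs, hsy⟩ => ?_⟩⟩
  exact (min'_le _ s (mem_filter.2 ⟨hs, hqs⟩)).not_gt hsy

lemma eq_of_consecutive_left {Q : Finset ℕ} {p x q : ℕ} (hp : (p, q) ∈ consecutivePairs Q)
    (hx : (x, q) ∈ consecutivePairs Q) : p = x := by
  rw [mem_consecutivePairs] at hp hx
  rcases lt_trichotomy p x with h | h | h
  · exact absurd ⟨h, hx.2.2.1⟩ (hp.2.2.2 x hx.1)
  · exact h
  · exact absurd ⟨h, hp.2.2.1⟩ (hx.2.2.2 p hp.1)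

lemma eq_of_consecutive_right {Q : Finset ℕ} {q r y : ℕ} (hr : (q, r) ∈ consecutivePairs Q)
    (hy : (q, y) ∈ consecutivePairs Q) : r = y := by
  rw [mem_consecutivePairs] at hr hy
  rcases lt_trichotomy r y with h | h | h
  · exact absurd ⟨hr.2.2.1, h⟩ (hy.2.2.2 r hr.2.1)
  · exact h
  · exact absurd ⟨hy.2.2.1, h⟩ (hr.2.2.2 y hy.2.1)

lemma mem_consecutivePairs_erase {Q : Finset ℕ} {p q r : ℕ} :
    (p, r) ∈ consecutivePairs (Q.erase q) ↔
      ((p, r) ∈ consecutivePairs Q ∧ p ≠ q ∧ r ≠ q) ∨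
        ((p, q) ∈ consecutivePairs Q ∧ (q, r) ∈ consecutivePairs Q) := by
  simp only [mem_consecutivePairs, mem_erase]
  constructor
  · rintro ⟨⟨hpq, hp⟩, ⟨hrq, hr⟩, hpr, hgap⟩
    by_cases hmid : q ∈ Q ∧ p < q ∧ q < r
    · obtain ⟨hq, hpq', hqr⟩ := hmid
      exact .inr ⟨⟨hp, hq, hpq', fun s hs h => hgap s ⟨h.2.ne, hs⟩ ⟨h.1, h.2.trans hqr⟩⟩,
        ⟨hq, hr, hqr, fun s hs h => hgap s ⟨h.1.ne', hs⟩ ⟨hpq'.trans h.1, h.2⟩⟩⟩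
    · refine .inl ⟨⟨hp, hr, hpr, fun s hs hsr => ?_⟩, hpq, hrq⟩
      rcases eq_or_ne s q with rfl | hsq
      · exact hmid ⟨hs, hsr⟩
      · exact hgap s ⟨hsq, hs⟩ hsr
  · rintro (⟨⟨hp, hr, hpr, hgap⟩, hpq, hrq⟩ | ⟨⟨hp, hq, hpq, hgap₁⟩, ⟨-, hr, hqr, hgap₂⟩⟩)
    · exact ⟨⟨hpq, hp⟩, ⟨hrq, hr⟩, hpr, fun s hs => hgap s hs.2⟩
    · refine ⟨⟨hpq.ne, hp⟩, ⟨hqr.ne', hr⟩, hpq.trans hqr, fun s ⟨hsq, hs⟩ ⟨hps, hsr⟩ => ?_⟩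
      rcases lt_or_gt_of_ne hsq with h | h
      · exact hgap₁ s hs ⟨hps, h⟩
      · exact hgap₂ s hs ⟨h, hsr⟩

lemma consecutivePairs_erase {Q : Finset ℕ} {x q y : ℕ} (hxq : (x, q) ∈ consecutivePairs Q)
    (hqy : (q, y) ∈ consecutivePairs Q) :
    consecutivePairs (Q.erase q) =
      insert (x, y) (((consecutivePairs Q).erase (x, q)).erase (q, y)) := by
  ext ⟨p, r⟩
  simp only [mem_consecutivePairs_erase, mem_insert, mem_erase, ne_eq, Prod.mk.injEq]
  constructor
  · rintro (⟨h, hpq, hrq⟩ | ⟨hp, hr⟩)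
    · exact .inr ⟨fun h' => hpq h'.1, fun h' => hrq h'.2, h⟩
    · exact .inl ⟨eq_of_consecutive_left hp hxq, eq_of_consecutive_right hr hqy⟩
  · rintro (⟨rfl, rfl⟩ | ⟨hqy', hxq', h⟩)
    · exact .inr ⟨hxq, hqy⟩
    · refine .inl ⟨h, fun hpq => hqy' ⟨hpq, ?_⟩, fun hrq => hxq' ⟨?_, hrq⟩⟩
      · subst hpq
        exact eq_of_consecutive_right h hqy
      · subst hrq
        exact eq_of_consecutive_left h hxq

lemma sum_update_consecutivePairs_erase {Q : Finset ℕ} {x q y : ℕ}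
    (hxq : (x, q) ∈ consecutivePairs Q) (hqy : (q, y) ∈ consecutivePairs Q) (f : ℕ × ℕ → ℝ)
    (b : ℝ) :
    ∑ e ∈ consecutivePairs (Q.erase q), Function.update f (x, y) b e =
      ∑ e ∈ consecutivePairs Q, f e - f (x, q) - f (q, y) + b := by
  have hxy : (x, y) ∉ ((consecutivePairs Q).erase (x, q)).erase (q, y) := fun h =>
    (mem_consecutivePairs.1 (mem_of_mem_erase (mem_of_mem_erase h))).2.2.2 q
      (mem_consecutivePairs.1 hxq).2.1
      ⟨(mem_consecutivePairs.1 hxq).2.2.1, (mem_consecutivePairs.1 hqy).2.2.1⟩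
  have hqy' : (q, y) ∈ (consecutivePairs Q).erase (x, q) :=
    mem_erase.2 ⟨fun h => (mem_consecutivePairs.1 hxq).2.2.1.ne' (Prod.ext_iff.1 h).1, hqy⟩
  rw [consecutivePairs_erase hxq hqy, sum_insert hxy, Function.update_self,
    ← sum_erase_add _ _ hxq, ← sum_erase_add _ _ hqy',
    sum_congr rfl fun e he => Function.update_of_ne (ne_of_mem_of_not_mem he hxy) _ _]
  ring

lemma consecutivePairs_Icc (lo hi : ℕ) :
    consecutivePairs (Icc lo hi) = (Ico lo hi).image fun i => (i, i + 1) := by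
  ext ⟨p, r⟩
  simp only [mem_consecutivePairs, mem_Icc, mem_image, mem_Ico, Prod.mk.injEq]
  constructor
  · rintro ⟨hp, hr, hpr, hgap⟩
    refine ⟨p, ⟨hp.1, by omega⟩, rfl, ?_⟩
    by_contra h
    exact hgap (p + 1) ⟨by omega, by omega⟩ ⟨by omega, by omega⟩
  · rintro ⟨i, hi, rfl, rfl⟩
    exact ⟨⟨hi.1, by omega⟩, ⟨by omega, hi.2⟩, by omega, fun s _ hs => by omega⟩

end ConsecutivePairs

/-- The paper's `Σ_{j ∈ N} w_j - max_{j ∈ N} w_j`, with the maximum taken at the largest index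
rather than the largest weight; the two agree when `W` is monotone. -/
def sumExceptMax (W : ℕ → ℝ) (N : Finset ℕ) : ℝ := ∑ t ∈ N, W t - W (N.sup id)

lemma sumExceptMax_insert {W : ℕ → ℝ} {N : Finset ℕ} {z t : ℕ} (hz : z ∉ N) (ht : t ∈ N)
    (hzt : z ≤ t) : sumExceptMax W (insert z N) = sumExceptMax W N + W z := by
  have hsup : (insert z N).sup id = N.sup id := by
    rw [sup_insert]
    exact sup_eq_right.2 (hzt.trans (le_sup (f := id) ht))
  rw [sumExceptMax, sumExceptMax, sum_insert hz, hsup]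
  ring

lemma sumExceptMax_pair {W : ℕ → ℝ} {z t : ℕ} (hzt : z < t) : sumExceptMax W {z, t} = W z := by
  rw [sumExceptMax_insert (by simpa using hzt.ne) (mem_singleton_self t) hzt.le]
  simp [sumExceptMax]

section Walk

/-- A walk visits the positions of a finite `Q ⊆ ℕ` in increasing order, at position `p` the node
labelled `v p`; its arcs are the consecutive pairs of positions. -/
def walkEnds (v : ℕ → ℕ) (e : ℕ × ℕ) : Sym2 ℕ := s(v e.1, v e.2)

def TreesBounded (v : ℕ → ℕ) (W : ℕ → ℝ) (f : ℕ × ℕ → ℝ) (Q : Finset ℕ) : Prop :=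
  ∀ I ⊆ consecutivePairs Q, IsTree (walkEnds v) I →
    sumExceptMax W (verts (walkEnds v) I) ≤ ∑ e ∈ I, f e

variable {v : ℕ → ℕ} {W : ℕ → ℝ} {f : ℕ × ℕ → ℝ} {Q : Finset ℕ} {x q y : ℕ}

lemma TreesBounded.le_of_lt_left (hopt : TreesBounded v W f Q)
    (hxq : (x, q) ∈ consecutivePairs Q) (hx : v q < v x) : W (v q) ≤ f (x, q) := by
  have := hopt {(x, q)} (singleton_subset_iff.2 hxq)
    (isTree_singleton (rfl : walkEnds v (x, q) = _) hx.ne')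
  rwa [verts_singleton (rfl : walkEnds v (x, q) = _), pair_comm, sumExceptMax_pair hx,
    sum_singleton] at this

lemma TreesBounded.le_of_lt_right (hopt : TreesBounded v W f Q)
    (hqy : (q, y) ∈ consecutivePairs Q) (hy : v q < v y) : W (v q) ≤ f (q, y) := by
  have := hopt {(q, y)} (singleton_subset_iff.2 hqy)
    (isTree_singleton (rfl : walkEnds v (q, y) = _) hy.ne)
  rwa [verts_singleton (rfl : walkEnds v (q, y) = _), sumExceptMax_pair hy,
    sum_singleton] at this

/-- A tree through the virtual arc `(x, y)` that bypasses `q` unfolds into trees of real arcs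
gaining `W (v q)`. -/
lemma TreesBounded.unfold (hopt : TreesBounded v W f Q) (hxq : (x, q) ∈ consecutivePairs Q)
    (hqy : (q, y) ∈ consecutivePairs Q) (hx : v q < v x) (hy : v q < v y) {J : Finset (ℕ × ℕ)}
    (hJ : J ⊆ ((consecutivePairs Q).erase (x, q)).erase (q, y)) (hgJ : (x, y) ∉ J)
    (hT : IsTree (walkEnds v) (insert (x, y) J)) :
    sumExceptMax W (verts (walkEnds v) (insert (x, y) J)) + W (v q) ≤
      f (x, q) + f (q, y) + ∑ e ∈ J, f e := by
  have hJQ : J ⊆ consecutivePairs Q := hJ.trans ((erase_subset _ _).trans (erase_subset _ _))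
  have hxqJ : (x, q) ∉ J := fun h => by simpa using hJ h
  have hqyJ : (q, y) ∉ J := fun h => by simpa using hJ h
  have hends : walkEnds v (x, y) = s(v x, v y) := rfl
  have hvx : v x ∈ verts (walkEnds v) (insert (x, y) J) :=
    mem_verts.2 ⟨_, mem_insert_self _ _, Sym2.mem_mk_left _ _⟩
  by_cases hq : v q ∈ verts (walkEnds v) (insert (x, y) J)
  · have := hopt.le_of_lt_left hxq hx
    have := hopt.le_of_lt_right hqy hy
    rcases reflTransGen_linked_of_insert hends (hT.2 _ hvx _ hq) with h | h
    · obtain ⟨hT', hverts⟩ := hT.reroute hgJ hends (rfl : walkEnds v (q, y) = _) hqyJ h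
      have := hopt _ (insert_subset hqy hJQ) hT'
      rw [hverts, sum_insert hqyJ] at this
      linarith
    · obtain ⟨hT', hverts⟩ := hT.reroute hgJ (hends.trans Sym2.eq_swap)
        ((rfl : walkEnds v (x, q) = _).trans Sym2.eq_swap) hxqJ h
      have := hopt _ (insert_subset hxq hJQ) hT'
      rw [hverts, sum_insert hxqJ] at this
      linarith
  · have hxq_qy : (x, q) ≠ (q, y) := fun h => by
      obtain rfl : x = q := (Prod.ext_iff.1 h).1
      exact lt_irrefl _ hx
    obtain ⟨hT', hverts⟩ := hT.subdivide hgJ hends rfl rfl hxqJ hqyJ hxq_qy hq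
    have := hopt _ (insert_subset hxq (insert_subset hqy hJQ)) hT'
    rw [hverts, sumExceptMax_insert hq hvx hx.le, sum_insert (by simp [hxq_qy, hxqJ]),
      sum_insert hqyJ] at this
    linarith

lemma TreesBounded.erase (hopt : TreesBounded v W f Q) (hxq : (x, q) ∈ consecutivePairs Q)
    (hqy : (q, y) ∈ consecutivePairs Q) (hx : v q < v x) (hy : v q < v y) :
    TreesBounded v W (Function.update f (x, y) (f (x, q) + f (q, y) - W (v q))) (Q.erase q) := by
  intro I hI hT
  rw [consecutivePairs_erase hxq hqy] at hI
  by_cases hg : (x, y) ∈ I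
  · rw [← insert_erase hg] at hT ⊢
    have hgJ : (x, y) ∉ I.erase (x, y) := notMem_erase _ _
    have := hopt.unfold hxq hqy hx hy (fun e he =>
      (mem_insert.1 (hI (mem_of_mem_erase he))).resolve_left (ne_of_mem_erase he)) hgJ hT
    rw [sum_insert hgJ, Function.update_self,
      sum_congr rfl fun e he => Function.update_of_ne (ne_of_mem_of_not_mem he hgJ) _ _]
    linarith
  · rw [sum_congr rfl fun e he => Function.update_of_ne (ne_of_mem_of_not_mem he hg) _ _]
    exact hopt I (fun e he => (erase_subset _ _).trans (erase_subset _ _)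
      ((mem_insert.1 (hI he)).resolve_left (ne_of_mem_of_not_mem he hg))) hT

variable {lo hi : ℕ} {S : Finset ℕ}

/-- The strict form of the minimality of a minimally guarded circuit. -/
def RepeatsSeparated (v : ℕ → ℕ) (S : Finset ℕ) : Prop :=
  ∀ p ∈ S, ∀ r ∈ S, p < r → v p = v r → ∃ s ∈ S, p < s ∧ s < r ∧ v p < v s

lemma repeatsSeparated_of_exists_le
    (h : ∀ p ∈ S, ∀ r ∈ S, p < r → v p = v r → ∃ s ∈ S, p < s ∧ s < r ∧ v p ≤ v s) :
    RepeatsSeparated v S := by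
  intro p hp r
  induction r using Nat.strong_induction_on with
  | _ r ih =>
  intro hr hpr heq
  obtain ⟨s, hs, hps, hsr, hle⟩ := h p hp r hr hpr heq
  rcases hle.lt_or_eq with hlt | heq'
  · exact ⟨s, hs, hps, hsr, hlt⟩
  · obtain ⟨s', hs', hps', hs's, hlt⟩ := ih s hsr hs hps heq'
    exact ⟨s', hs', hps', hs's.trans hsr, hlt⟩

lemma exists_consecutive_lt (hS : S ⊆ Ioo lo hi) (hguard : ∀ p ∈ S, v p < v lo ∧ v p < v hi)
    (hmin : RepeatsSeparated v S) (hqS : q ∈ S) (hqmin : ∀ p ∈ S, v q ≤ v p) :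
    ∃ x y, (x, q) ∈ consecutivePairs (insert lo (insert hi S)) ∧
      (q, y) ∈ consecutivePairs (insert lo (insert hi S)) ∧ v q < v x ∧ v q < v y := by
  obtain ⟨hloq, hqhi⟩ := mem_Ioo.1 (hS hqS)
  have hSQ : S ⊆ insert lo (insert hi S) := (subset_insert _ _).trans (subset_insert _ _)
  have hne : ∀ p ∈ S, ∀ r ∈ S, (p, r) ∈ consecutivePairs (insert lo (insert hi S)) →
      v p ≠ v r := fun p hp r hr hpr heq => by
    obtain ⟨s, hs, hps, hsr, -⟩ := hmin p hp r hr (mem_consecutivePairs.1 hpr).2.2.1 heq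
    exact (mem_consecutivePairs.1 hpr).2.2.2 s (hSQ hs) ⟨hps, hsr⟩
  obtain ⟨x, hxq⟩ := exists_consecutive_left (mem_insert_self _ _) (hSQ hqS) hloq
  obtain ⟨y, hqy⟩ := exists_consecutive_right (hSQ hqS)
    (mem_insert_of_mem (mem_insert_self _ _)) hqhi
  refine ⟨x, y, hxq, hqy, ?_, ?_⟩
  · obtain ⟨hxQ, -, hxq', -⟩ := mem_consecutivePairs.1 hxq
    rcases mem_insert.1 hxQ with rfl | hxQ
    · exact (hguard q hqS).1
    rcases mem_insert.1 hxQ with rfl | hxS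
    · exact absurd (hxq'.trans hqhi) (lt_irrefl _)
    · exact (hqmin x hxS).lt_of_ne (hne x hxS q hqS hxq).symm
  · obtain ⟨-, hyQ, hqy', -⟩ := mem_consecutivePairs.1 hqy
    rcases mem_insert.1 hyQ with rfl | hyQ
    · exact absurd (hloq.trans hqy') (lt_irrefl _)
    rcases mem_insert.1 hyQ with rfl | hyS
    · exact (hguard q hqS).2
    · exact (hqmin y hyS).lt_of_ne (hne q hqS y hyS hqy)

theorem sum_le_of_treesBounded (hS : S ⊆ Ioo lo hi) (hguard : ∀ p ∈ S, v p < v lo ∧ v p < v hi)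
    (hmin : RepeatsSeparated v S)
    (hf : ∀ e, 0 ≤ f e) (hopt : TreesBounded v W f (insert lo (insert hi S))) :
    ∑ p ∈ S, W (v p) ≤ ∑ e ∈ consecutivePairs (insert lo (insert hi S)), f e := by
  induction S using Finset.strongInduction generalizing f with
  | H S ih =>
  rcases S.eq_empty_or_nonempty with rfl | hne
  · exact sum_empty.trans_le (sum_nonneg fun e _ => hf e)
  obtain ⟨q, hqS, hqmin⟩ := S.exists_min_image v hne
  obtain ⟨hloq, hqhi⟩ := mem_Ioo.1 (hS hqS)
  obtain ⟨x, y, hxq, hqy, hx, hy⟩ := exists_consecutive_lt hS hguard hmin hqS hqmin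
  have hQ : (insert lo (insert hi S)).erase q = insert lo (insert hi (S.erase q)) := by
    rw [erase_insert_of_ne hloq.ne, erase_insert_of_ne hqhi.ne']
  have hf' : ∀ e, 0 ≤ Function.update f (x, y) (f (x, q) + f (q, y) - W (v q)) e := by
    intro e
    rcases eq_or_ne e (x, y) with rfl | he
    · rw [Function.update_self]
      linarith [hopt.le_of_lt_left hxq hx, hf (q, y)]
    · rw [Function.update_of_ne he]
      exact hf e
  have hmin' : RepeatsSeparated v (S.erase q) := fun p hp r hr hpr heq => by
    obtain ⟨s, hs, hps, hsr, hlt⟩ := hmin p (mem_of_mem_erase hp) r (mem_of_mem_erase hr) hpr heq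
    refine ⟨s, mem_erase.2 ⟨?_, hs⟩, hps, hsr, hlt⟩
    rintro rfl
    exact (hqmin p (mem_of_mem_erase hp)).not_gt hlt
  have hrec := ih (S.erase q) (erase_ssubset hqS) ((erase_subset _ _).trans hS)
    (fun p hp => hguard p (mem_of_mem_erase hp)) hmin' hf' (hQ ▸ hopt.erase hxq hqy hx hy)
  rw [← hQ, sum_update_consecutivePairs_erase hxq hqy] at hrec
  rw [← sum_erase_add _ _ hqS]
  linarith


end Walk

section ComponentLabels

omit [Fintype V] [DecidableEq V]

variable {A : Finset (Sym2 V)} {κ : V → ℕ}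

lemma widthSet_nonneg {Eall : Finset (Sym2 V)} {d : Sym2 V → ℝ} (hd : ∀ e, 0 ≤ d e)
    (T : Finset (V × V)) (W : Set V) : 0 ≤ widthSet Eall d T W :=
  Real.sSup_nonneg fun _ ⟨_, _, _, _, hx⟩ => hx ▸ Real.iInf_nonneg fun _ =>
    List.sum_nonneg fun _ hy => by
      obtain ⟨e, -, rfl⟩ := List.mem_map.1 hy
      exact hd e

lemma reachable_graphOf_mono {F G : Finset (Sym2 V)} (h : F ⊆ G) {u u' : V}
    (hr : (graphOf F).Reachable u u') : (graphOf G).Reachable u u' :=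
  hr.mono (G := graphOf F) fun _ _ hadj => ⟨hadj.1, h hadj.2⟩

/-- The component of `A` whose vertices have label `t` under `κ` (junk if there are none). -/
noncomputable def compOf [Nonempty V] (A : Finset (Sym2 V)) (κ : V → ℕ) (t : ℕ) :
    (graphOf A).ConnectedComponent :=
  (graphOf A).connectedComponentMk (Function.invFun κ t)

lemma compOf_apply [Nonempty V] (hκ : ∀ u u', κ u = κ u' ↔ (graphOf A).Reachable u u')
    (u : V) : compOf A κ (κ u) = (graphOf A).connectedComponentMk u :=
  SimpleGraph.ConnectedComponent.sound ((hκ _ _).1 (Function.invFun_eq ⟨u, rfl⟩))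

lemma compOf_injOn [Nonempty V] (hκ : ∀ u u', κ u = κ u' ↔ (graphOf A).Reachable u u') :
    Set.InjOn (compOf A κ) (Set.range κ) := by
  rintro _ ⟨u, rfl⟩ _ ⟨u', rfl⟩ h
  rw [compOf_apply hκ, compOf_apply hκ] at h
  exact (hκ u u').2 (SimpleGraph.ConnectedComponent.exact h)

end ComponentLabels

section ContractedGraph

variable {ι : Type*} {A : Finset (Sym2 V)} {κ : V → ℕ} {ends : ι → Sym2 ℕ} {x y : ι → V}
  {I : Finset ι}

omit [Fintype V] in
lemma reachable_of_reflTransGen_linked (hκ : ∀ u u', κ u = κ u' ↔ (graphOf A).Reachable u u')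
    (hends : ∀ i ∈ I, ends i = s(κ (x i), κ (y i)))
    (hcross : ∀ i ∈ I, ¬ (graphOf A).Reachable (x i) (y i)) {u u' : V}
    (h : ReflTransGen (Linked ends I) (κ u) (κ u')) :
    (graphOf (A ∪ I.image fun i => s(x i, y i))).Reachable u u' := by
  generalize ht : κ u' = t at h
  induction h generalizing u' with
  | refl => exact reachable_graphOf_mono subset_union_left ((hκ u u').1 ht.symm)
  | @tail t₁ t₂ _ hlink ih =>
    obtain ⟨i, hi, he⟩ := hlink
    have hadj : (graphOf (A ∪ I.image fun i => s(x i, y i))).Adj (x i) (y i) :=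
      ⟨fun h => hcross i hi (h ▸ .refl _), mem_union_right _ (mem_image_of_mem _ hi)⟩
    rw [hends i hi, Sym2.eq_iff] at he
    rcases he with ⟨h₁, h₂⟩ | ⟨h₁, h₂⟩
    · exact ((ih h₁).trans hadj.reachable).trans
        (reachable_graphOf_mono subset_union_left ((hκ _ _).1 (h₂.trans ht.symm)))
    · exact ((ih h₂).trans hadj.symm.reachable).trans
        (reachable_graphOf_mono subset_union_left ((hκ _ _).1 (h₁.trans ht.symm)))

lemma mem_suppF_image {u : V} :
    u ∈ suppF (I.image fun i => s(x i, y i)) ↔ ∃ i ∈ I, u = x i ∨ u = y i := by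
  simp [suppF]

lemma touched_image [Nonempty V] (hκ : ∀ u u', κ u = κ u' ↔ (graphOf A).Reachable u u')
    (hends : ∀ i ∈ I, ends i = s(κ (x i), κ (y i))) :
    touched A (I.image fun i => s(x i, y i)) = (verts ends I).image (compOf A κ) := by
  ext C
  simp only [touched, mem_image, mem_suppF_image, mem_verts_iff_of_eq hends]
  constructor
  · rintro ⟨u, ⟨i, hi, rfl | rfl⟩, rfl⟩
    · exact ⟨_, ⟨i, hi, .inl rfl⟩, compOf_apply hκ _⟩
    · exact ⟨_, ⟨i, hi, .inr rfl⟩, compOf_apply hκ _⟩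
  · rintro ⟨t, ⟨i, hi, rfl | rfl⟩, rfl⟩
    · exact ⟨_, ⟨i, hi, .inl rfl⟩, (compOf_apply hκ _).symm⟩
    · exact ⟨_, ⟨i, hi, .inr rfl⟩, (compOf_apply hκ _).symm⟩

theorem isGATree_image [Nonempty V] (hκ : ∀ u u', κ u = κ u' ↔ (graphOf A).Reachable u u')
    (hends : ∀ i ∈ I, ends i = s(κ (x i), κ (y i)))
    (hcross : ∀ i ∈ I, ¬ (graphOf A).Reachable (x i) (y i))
    (hinj : Set.InjOn (fun i => s(x i, y i)) I) (hT : IsTree ends I) :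
    IsGATree A (I.image fun i => s(x i, y i)) := by
  refine ⟨?_, ?_, fun u hu u' hu' => ?_⟩
  · simp only [mem_image]
    rintro _ ⟨i, hi, rfl⟩ p r hpr
    rcases Sym2.eq_iff.1 hpr with ⟨rfl, rfl⟩ | ⟨rfl, rfl⟩
    · exact hcross i hi
    · exact fun h => hcross i hi h.symm
  · have hinjC : Set.InjOn (compOf A κ) (verts ends I) := (compOf_injOn hκ).mono fun t ht => by
      obtain ⟨i, -, rfl | rfl⟩ := (mem_verts_iff_of_eq hends).1 ht <;> exact ⟨_, rfl⟩
    rw [touched_image hκ hends, card_image_of_injOn hinjC, hT.1, card_image_of_injOn hinj]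
  · have hmem : ∀ w ∈ suppF (I.image fun i => s(x i, y i)), κ w ∈ verts ends I := fun w hw => by
      obtain ⟨i, hi, rfl | rfl⟩ := mem_suppF_image.1 hw
      · exact (mem_verts_iff_of_eq hends).2 ⟨i, hi, .inl rfl⟩
      · exact (mem_verts_iff_of_eq hends).2 ⟨i, hi, .inr rfl⟩
    exact reachable_of_reflTransGen_linked hκ hends hcross (hT.2 _ (hmem u hu) _ (hmem u' hu'))

theorem sumExceptMax_le_of_connApproxOptimal [Nonempty V] {Eall : Finset (Sym2 V)}
    {d : Sym2 V → ℝ} {T : Finset (V × V)} {c : ℝ} (hd : ∀ e, 0 ≤ d e)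
    (hκ : ∀ u u', κ u = κ u' ↔ (graphOf A).Reachable u u')
    (hmono : ∀ u u' : V, κ u ≤ κ u' →
      widthSet Eall d T ((graphOf A).connectedComponentMk u).supp ≤
        widthSet Eall d T ((graphOf A).connectedComponentMk u').supp)
    (hopt : ConnApproxOptimal Eall Eall d T c A) (hedges : ∀ i ∈ I, s(x i, y i) ∈ Eall)
    (hends : ∀ i ∈ I, ends i = s(κ (x i), κ (y i)))
    (hcross : ∀ i ∈ I, ¬ (graphOf A).Reachable (x i) (y i))
    (hinj : Set.InjOn (fun i => s(x i, y i)) I) (hT : IsTree ends I) :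
    sumExceptMax (fun t => widthSet Eall d T (compOf A κ t).supp) (verts ends I) ≤
      c * ∑ i ∈ I, d s(x i, y i) := by
  have hrange : ∀ t ∈ verts ends I, ∃ u, κ u = t := fun t ht => by
    obtain ⟨i, -, rfl | rfl⟩ := (mem_verts_iff_of_eq hends).1 ht <;> exact ⟨_, rfl⟩
  have hB := hopt _ (image_subset_iff.2 hedges) (isGATree_image hκ hends hcross hinj hT)
  rw [touched_image hκ hends, sum_image fun t ht t' ht' => compOf_injOn hκ (hrange t ht)
    (hrange t' ht'), sum_image hinj] at hB
  obtain ⟨m, hm, hmax⟩ := exists_mem_eq_sup _ (card_pos.1 (by rw [hT.1]; omega)) id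
  have hsup : ⨆ C ∈ (verts ends I).image (compOf A κ), widthSet Eall d T C.supp ≤
      widthSet Eall d T (compOf A κ m).supp := by
    refine Real.iSup_le (fun C => Real.iSup_le (fun hC => ?_) (widthSet_nonneg hd _ _))
      (widthSet_nonneg hd _ _)
    obtain ⟨t, ht, rfl⟩ := mem_image.1 hC
    obtain ⟨u, rfl⟩ := hrange t ht
    obtain ⟨u', rfl⟩ := hrange m hm
    rw [compOf_apply hκ, compOf_apply hκ]
    exact hmono u u' ((le_sup (f := id) ht).trans_eq hmax)
  rw [sumExceptMax, hmax]
  exact (sub_le_sub_left hsup _).trans hB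

theorem sum_widthSet_le_of_minimallyGuarded [Nonempty V] {Eall : Finset (Sym2 V)}
    {d : Sym2 V → ℝ} {T : Finset (V × V)} {c : ℝ} (hd : ∀ e, 0 ≤ d e)
    (hκ : ∀ u u', κ u = κ u' ↔ (graphOf A).Reachable u u')
    (hmono : ∀ u u' : V, κ u ≤ κ u' →
      widthSet Eall d T ((graphOf A).connectedComponentMk u).supp ≤
        widthSet Eall d T ((graphOf A).connectedComponentMk u').supp)
    (hc : 0 ≤ c) (hopt : ConnApproxOptimal Eall Eall d T c A) {n : ℕ} {a b : ℕ → V}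
    (hedges : ∀ p < n, s(a p, b p) ∈ Eall) (hcross : ∀ p < n, ¬ (graphOf A).Reachable (a p) (b p))
    (hconsec : ∀ p < n, κ (b p) = κ (a (p + 1)))
    (hinj : ∀ p < n, ∀ r < n, s(a p, b p) = s(a r, b r) → p = r)
    (hclosed : κ (a n) = κ (a 0)) (hguard : ∀ p ∈ Ioo 0 n, κ (a p) < κ (a 0))
    (hmin : ∀ p ∈ Ioo 0 n, ∀ r ∈ Ioo 0 n, p < r → κ (a p) = κ (a r) →
      ∃ s ∈ Ioo 0 n, p < s ∧ s < r ∧ κ (a p) ≤ κ (a s)) :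
    ∑ p ∈ Ioo 0 n, widthSet Eall d T ((graphOf A).connectedComponentMk (a p)).supp ≤
      c * ∑ p ∈ range n, d s(a p, b p) := by
  have hQ : insert 0 (insert n (Ioo 0 n)) = Icc 0 n := by
    ext p
    simp only [mem_insert, mem_Ioo, mem_Icc]
    omega
  have hopt' : TreesBounded (κ ∘ a) (fun t => widthSet Eall d T (compOf A κ t).supp)
      (fun e => c * d s(a e.1, b e.1)) (insert 0 (insert n (Ioo 0 n))) := by
    intro I hI hT
    rw [hQ, consecutivePairs_Icc] at hI
    have hI' : ∀ e ∈ I, e.1 < n ∧ e.2 = e.1 + 1 := fun e he => by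
      obtain ⟨i, hi, rfl⟩ := mem_image.1 (hI he)
      exact ⟨(mem_Ico.1 hi).2, rfl⟩
    rw [← mul_sum]
    refine sumExceptMax_le_of_connApproxOptimal hd hκ hmono hopt
      (fun e he => hedges _ (hI' e he).1)
      (fun e he => by rw [walkEnds, (hI' e he).2, hconsec _ (hI' e he).1]; rfl)
      (fun e he => hcross _ (hI' e he).1) (fun e he e' he' h => ?_) hT
    have h' := hinj _ (hI' e he).1 _ (hI' e' he').1 h
    exact Prod.ext h' (by rw [(hI' e he).2, (hI' e' he').2, h'])
  have key := sum_le_of_treesBounded subset_rfl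
    (fun p hp => ⟨hguard p hp, (hguard p hp).trans_eq hclosed.symm⟩)
    (repeatsSeparated_of_exists_le hmin) (fun e => mul_nonneg hc (hd _)) hopt'
  rw [hQ, consecutivePairs_Icc, sum_image fun _ _ _ _ h => (Prod.ext_iff.1 h).1, ← mul_sum,
    Nat.Ico_zero_eq_range] at key
  simpa only [Function.comp, compOf_apply hκ] using key

end ContractedGraph

lemma Fin.sum_filter_ne_zero_eq_sum_Ioo {M : Type*} [AddCommMonoid M] {n : ℕ} (hn : 0 < n)
    (f : ℕ → M) : ∑ i ∈ univ.filter (fun i : Fin n => i ≠ ⟨0, hn⟩), f i = ∑ p ∈ Ioo 0 n, f p := by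
  refine sum_nbij' (fun i => i) (fun p => ⟨p % n, Nat.mod_lt _ hn⟩) (fun i hi => ?_)
    (fun p hp => ?_) (fun i _ => Fin.ext (Nat.mod_eq_of_lt i.isLt))
    (fun p hp => Nat.mod_eq_of_lt (mem_Ioo.1 hp).2) (fun _ _ => rfl)
  · simp_all [Fin.ext_iff, Nat.pos_iff_ne_zero]
  · simp_all [Fin.ext_iff, Nat.mod_eq_of_lt, Nat.pos_iff_ne_zero]

theorem stmt17_minimally_guarded_general
    (Eall : Finset (Sym2 V)) (d : Sym2 V → ℝ) (hd : ∀ e, 0 ≤ d e)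
    (T : Finset (V × V)) (A : Finset (Sym2 V))
    (ci : V → ℕ)
    (hci : ∀ u v : V, ci u = ci v ↔ (graphOf A).Reachable u v)
    (hmono : ∀ u v : V, ci u ≤ ci v →
      widthSet Eall d T ((graphOf A).connectedComponentMk u).supp ≤
        widthSet Eall d T ((graphOf A).connectedComponentMk v).supp)
    (c : ℝ) (hc : 1 ≤ c)
    (hopt : ConnApproxOptimal Eall Eall d T c A)
    (n : ℕ) (hn : 0 < n) (a b : Fin n → V)
    (hedges : ∀ i, s(a i, b i) ∈ Eall)
    (hcross : ∀ i, ¬ (graphOf A).Reachable (a i) (b i))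
    (hconsec : ∀ i : Fin n,
      (graphOf A).Reachable (b i) (a ⟨((i : ℕ) + 1) % n, Nat.mod_lt _ hn⟩))
    (hinj : Function.Injective (fun i : Fin n => s(a i, b i)))
    (hguard : ∀ i : Fin n, i ≠ ⟨0, hn⟩ → ci (a i) < ci (a ⟨0, hn⟩))
    (hmin : ∀ i₁ i₂ : Fin n, (⟨0, hn⟩ : Fin n) < i₁ → i₁ < i₂ →
      ci (a i₁) = ci (a i₂) → ∃ j : Fin n, i₁ < j ∧ j < i₂ ∧ ci (a i₁) ≤ ci (a j)) :
    ∑ i ∈ Finset.univ.filter (fun i : Fin n => i ≠ ⟨0, hn⟩),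
        widthSet Eall d T ((graphOf A).connectedComponentMk (a i)).supp
      ≤ c * ∑ i : Fin n, d s(a i, b i) := by
  have : Nonempty V := ⟨a ⟨0, hn⟩⟩
  let idx : ℕ → Fin n := fun p => ⟨p % n, Nat.mod_lt _ hn⟩
  have hidx : ∀ p (hp : p < n), idx p = ⟨p, hp⟩ := fun p hp => Fin.ext (Nat.mod_eq_of_lt hp)
  have key := sum_widthSet_le_of_minimallyGuarded (n := n) (a := a ∘ idx) (b := b ∘ idx) hd hci
    hmono (by linarith) hopt (fun _ _ => hedges _) (fun _ _ => hcross _)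
    (fun p _ => (hci _ _).2 (by simpa [idx, Nat.add_mod] using hconsec (idx p)))
    (fun p hp r hr h => by simpa [hidx p hp, hidx r hr] using congrArg Fin.val (hinj h))
    (by simp [idx])
    (fun p hp => by
      obtain ⟨hp0, hpn⟩ := mem_Ioo.1 hp
      simpa [hidx p hpn, hidx 0 hn] using hguard ⟨p, hpn⟩ (by simp [Fin.ext_iff, hp0.ne']))
    (fun p hp r hr hpr h => by
      obtain ⟨j, hpj, hjr, hle⟩ := hmin ⟨p, (mem_Ioo.1 hp).2⟩ ⟨r, (mem_Ioo.1 hr).2⟩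
        (mem_Ioo.1 hp).1 hpr (by simpa [hidx p (mem_Ioo.1 hp).2, hidx r (mem_Ioo.1 hr).2] using h)
      exact ⟨j, mem_Ioo.2 ⟨(mem_Ioo.1 hp).1.trans hpj, j.isLt⟩, hpj, hjr,
        by simpa [hidx p (mem_Ioo.1 hp).2, hidx j j.isLt] using hle⟩)
  rw [← Fin.sum_filter_ne_zero_eq_sum_Ioo hn, ← Fin.sum_univ_eq_sum_range] at key
  simpa [hidx _ (Fin.isLt _)] using key

theorem stmt17_minimally_guarded
    (Eall : Finset (Sym2 V)) (d : Sym2 V → ℝ) (hd : ∀ e, 0 ≤ d e)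
    (T : Finset (V × V)) (A : Finset (Sym2 V)) (hAE : A ⊆ Eall)
    (hAfeas : Feasible A T)
    (ci : V → ℕ)
    (hci : ∀ u v : V, ci u = ci v ↔ (graphOf A).Reachable u v)
    (hmono : ∀ u v : V, ci u ≤ ci v →
      widthSet Eall d T ((graphOf A).connectedComponentMk u).supp ≤
        widthSet Eall d T ((graphOf A).connectedComponentMk v).supp)
    (c : ℝ) (hc : 1 ≤ c)
    (hopt : ConnApproxOptimal Eall Eall d T c A)
    (n : ℕ) (hn : 0 < n) (a b : Fin n → V)
    (hedges : ∀ i, s(a i, b i) ∈ Eall)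
    (hcross : ∀ i, ¬ (graphOf A).Reachable (a i) (b i))
    (hconsec : ∀ i : Fin n,
      (graphOf A).Reachable (b i) (a ⟨((i : ℕ) + 1) % n, Nat.mod_lt _ hn⟩))
    (hinj : Function.Injective (fun i : Fin n => s(a i, b i)))
    (hguard : ∀ i : Fin n, i ≠ ⟨0, hn⟩ → ci (a i) < ci (a ⟨0, hn⟩))
    (hmin : ∀ i₁ i₂ : Fin n, (⟨0, hn⟩ : Fin n) < i₁ → i₁ < i₂ →
      ci (a i₁) = ci (a i₂) → ∃ j : Fin n, i₁ < j ∧ j < i₂ ∧ ci (a i₁) ≤ ci (a j)) :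
    ∑ i ∈ Finset.univ.filter (fun i : Fin n => i ≠ ⟨0, hn⟩),
        widthSet Eall d T ((graphOf A).connectedComponentMk (a i)).supp
      ≤ c * ∑ i : Fin n, d s(a i, b i) :=
  stmt17_minimally_guarded_general Eall d hd T A ci hci hmono c hc hopt n hn a b hedges hcross
    hconsec hinj hguard hmin
end
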